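/- arXiv:2109.04742 — 5 statements merged into one kernel-verified Lean document; each statement's English description precedes it below -/
import Mathlib

section
/- Let (A,B,C,D) be a controllable and observable (minimal) LTI system with state dimension n_x and lag l. Let (u_d, y_d) be a trajectory of the system of length N, let (u_ini, y_ini) be a trajectory of the system of length L_0 with L_0 ≥ l, let u_s be an input sequence of length L_s, and set L = L_0 + L_s. Assume u_d is persistently exciting of order L + n_x. Partition the block Hankel matrices 𝓗_L(u_d) = [U_p; U_f] and 𝓗_L(y_d) = [Y_p; Y_f], where U_p, Y_p contain the first L_0 block rows and U_f, Y_f the last L_s block rows. Then: (i) there exists a vector g ∈ ℝ^{N−L+1} such that U_p g = u_ini, Y_p g = y_ini, and U_f g = u_s; and (ii) for every such g and for every output sequence y_s of length L_s such that the concatenated sequences (u_ini followed by u_s, y_ini followed by y_s) form a trajectory of the system, one has y_s = Y_f g (stacked as a vector). -/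
/-!
Willems' fundamental lemma: if `(A, B)` is controllable and `u_d` is persistently exciting of
order `L + nₓ`, the matrix `[X₀; H_L(u_d)]` of initial states and input windows has full row rank.
A left-kernel vector `(ξ, ζ)` stays one after substituting the state equation `k` times, giving
`(ξ Aᵏ, ξ A^{k-1} B, …, ξ B, ζ)`; combining these for `k ≤ nₓ` with the coefficients of `χ_A`
kills the state part by Cayley–Hamilton, so the combination annihilates `H_{L+nₓ}(u_d)` and
vanishes. The resulting triangular system forces `ζ = 0` and `ξ Aʳ B = 0` for `r < nₓ`, hence
`ξ = 0`.

Each column combination `∑ⱼ gⱼ (u, y, x)_{t+j}` of the data is again a trajectory, so a `g`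
matching the initial state of `(u_ini, y_ini)` and the inputs `u_ini, u_s` also reproduces
`y_ini`. Conversely, for any `g` matching `(u_ini, y_ini, u_s)`, the trajectory it generates and
`(u_ini u_s, y_ini y_s)` share their inputs and their first `L₀ ≥ l` outputs; as `O_l` is
injective they have the same initial state, hence the same outputs `y_s = Y_f g`.
-/

open Matrix

namespace DDSim

/-- `(u, y)` is a length-`T` input/output trajectory of the LTI system `(A, B, C, D)`
with state sequence `x`. -/
def IsStateTraj {nx nu ny : ℕ} (A : Matrix (Fin nx) (Fin nx) ℝ) (B : Matrix (Fin nx) (Fin nu) ℝ)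
    (C : Matrix (Fin ny) (Fin nx) ℝ) (D : Matrix (Fin ny) (Fin nu) ℝ)
    (T : ℕ) (u : ℕ → Fin nu → ℝ) (y : ℕ → Fin ny → ℝ) (x : ℕ → Fin nx → ℝ) : Prop :=
  ∀ t < T, x (t + 1) = A.mulVec (x t) + B.mulVec (u t) ∧
           y t = C.mulVec (x t) + D.mulVec (u t)

/-- `(u, y)` is a length-`T` input/output trajectory of the LTI system `(A, B, C, D)`. -/
def IsTraj {nx nu ny : ℕ} (A : Matrix (Fin nx) (Fin nx) ℝ) (B : Matrix (Fin nx) (Fin nu) ℝ)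
    (C : Matrix (Fin ny) (Fin nx) ℝ) (D : Matrix (Fin ny) (Fin nu) ℝ)
    (T : ℕ) (u : ℕ → Fin nu → ℝ) (y : ℕ → Fin ny → ℝ) : Prop :=
  ∃ x : ℕ → Fin nx → ℝ, IsStateTraj A B C D T u y x

/-- Controllability matrix `[B, AB, …, A^{n_x-1}B]`. -/
def ctrbMat {nx nu : ℕ} (A : Matrix (Fin nx) (Fin nx) ℝ) (B : Matrix (Fin nx) (Fin nu) ℝ) :
    Matrix (Fin nx) (Fin nx × Fin nu) ℝ :=
  fun k p => (A ^ (p.1 : ℕ) * B) k p.2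

/-- Extended observability matrix `O_i = [C; CA; …; CA^{i-1}]`. -/
def obsMat {nx ny : ℕ} (A : Matrix (Fin nx) (Fin nx) ℝ) (C : Matrix (Fin ny) (Fin nx) ℝ)
    (i : ℕ) : Matrix (Fin i × Fin ny) (Fin nx) ℝ :=
  fun p k => (C * A ^ (p.1 : ℕ)) p.2 k

/-- Block Hankel matrix of depth `L` of a length-`N` signal: `(i, j)` block entry `z_{i+j}`. -/
def hankel {nz : ℕ} (z : ℕ → Fin nz → ℝ) (L N : ℕ) :
    Matrix (Fin L × Fin nz) (Fin (N - L + 1)) ℝ :=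
  fun p j => z ((p.1 : ℕ) + (j : ℕ)) p.2

/-- Block of `rows` consecutive block rows (starting at shift `off`) of a block Hankel matrix
with `cols` columns: `(i, j)` block entry `z_{off+i+j}`. -/
def blockRows {nz : ℕ} (z : ℕ → Fin nz → ℝ) (off rows cols : ℕ) :
    Matrix (Fin rows × Fin nz) (Fin cols) ℝ :=
  fun p j => z (off + (p.1 : ℕ) + (j : ℕ)) p.2

open Finset

section RankFacts

variable {K m n : Type*} [Field K] [Fintype m] [Fintype n] {M : Matrix m n K}

lemma vecMul_injective_of_rank_eq_card_rows (h : M.rank = Fintype.card m) :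
    Function.Injective M.vecMul :=
  vecMul_injective_iff.mpr <| linearIndependent_iff_card_eq_finrank_span.mpr <| by
    rw [Set.finrank, ← rank_eq_finrank_span_row, h]

lemma mulVec_injective_of_rank_eq_card_cols (h : M.rank = Fintype.card n) :
    Function.Injective M.mulVec := by
  have := vecMul_injective_of_rank_eq_card_rows (M := Mᵀ) (by rwa [rank_transpose])
  simpa only [Function.Injective, vecMul_transpose] using this

lemma mulVec_surjective_of_vecMul_injective (h : Function.Injective M.vecMul) :
    Function.Surjective M.mulVec := by
  have hrank : M.rank = Fintype.card m := (vecMul_injective_iff.mp h).rank_matrix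
  have : LinearMap.range M.mulVecLin = ⊤ :=
    Submodule.eq_top_of_finrank_eq (by rw [← rank, hrank, Module.finrank_fintype_fun_eq_card])
  exact LinearMap.range_eq_top.mp this

end RankFacts

lemma sum_charpoly_coeff_smul_pow_eq_zero {R : Type*} [CommRing R] [Nontrivial R] {n : ℕ}
    (A : Matrix (Fin n) (Fin n) R) :
    ∑ k ∈ range (n + 1), A.charpoly.coeff k • A ^ k = 0 := by
  simpa [Polynomial.aeval_eq_sum_range] using aeval_self_charpoly A

section Hankel

def shiftSum {n K : ℕ} (z : ℕ → Fin n → ℝ) (g : Fin K → ℝ) (t : ℕ) : Fin n → ℝ :=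
  ∑ j, g j • z (t + j)

variable {n K : ℕ}

lemma blockRows_mulVec_apply (z : ℕ → Fin n → ℝ) (off rows : ℕ) (g : Fin K → ℝ)
    (p : Fin rows × Fin n) : (blockRows z off rows K *ᵥ g) p = shiftSum z g (off + p.1) p.2 := by
  simp [blockRows, shiftSum, mulVec, dotProduct, Finset.sum_apply, mul_comm]

lemma blockRows_mulVec_eq_iff {z : ℕ → Fin n → ℝ} {off rows : ℕ} {g : Fin K → ℝ}
    {w : ℕ → Fin n → ℝ} :
    blockRows z off rows K *ᵥ g = (fun p => w p.1 p.2) ↔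
      ∀ t < rows, shiftSum z g (off + t) = w t := by
  refine ⟨fun h t ht => funext fun i => ?_, fun h => funext fun p => ?_⟩
  · rw [← blockRows_mulVec_apply z off rows g (⟨t, ht⟩, i), h]
  · rw [blockRows_mulVec_apply, h p.1 p.1.isLt]

lemma vecMul_blockRows (ζ : ℕ → Fin n → ℝ) (z : ℕ → Fin n → ℝ) (off rows : ℕ) :
    (fun p : Fin rows × Fin n => ζ p.1 p.2) ᵥ* blockRows z off rows K =
      fun j : Fin K => ∑ t ∈ range rows, ζ t ⬝ᵥ z (off + t + j) := by
  ext j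
  rw [← Fin.sum_univ_eq_sum_range (fun t => ζ t ⬝ᵥ z (off + t + j))]
  simp [vecMul, dotProduct, blockRows, Fintype.sum_prod_type]

lemma hankel_eq_blockRows (z : ℕ → Fin n → ℝ) (L N : ℕ) :
    hankel z L N = blockRows z 0 L (N - L + 1) := by
  ext p j
  simp [hankel, blockRows]

def blockSeq {L : ℕ} (η : Fin L × Fin n → ℝ) (t : ℕ) : Fin n → ℝ :=
  fun i => if h : t < L then η (⟨t, h⟩, i) else 0

lemma blockSeq_eta {L : ℕ} (η : Fin L × Fin n → ℝ) : (fun p => blockSeq η p.1 p.2) = η := by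
  ext p
  simp [blockSeq]

lemma blockSeq_of_le {L : ℕ} (η : Fin L × Fin n → ℝ) {t : ℕ} (ht : L ≤ t) : blockSeq η t = 0 := by
  ext i
  simp [blockSeq, Nat.not_lt.mpr ht]

end Hankel

section StateSpace

variable {nx nu ny : ℕ} {A : Matrix (Fin nx) (Fin nx) ℝ} {B : Matrix (Fin nx) (Fin nu) ℝ}
  {C : Matrix (Fin ny) (Fin nx) ℝ} {D : Matrix (Fin ny) (Fin nu) ℝ}

lemma state_eq_pow_mulVec_add_sum {N : ℕ} {u : ℕ → Fin nu → ℝ} {x : ℕ → Fin nx → ℝ}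
    (hx : ∀ t < N, x (t + 1) = A *ᵥ x t + B *ᵥ u t) {j : ℕ} :
    ∀ k, j + k ≤ N →
      x (j + k) = A ^ k *ᵥ x j + ∑ i ∈ range k, (A ^ (k - 1 - i) * B) *ᵥ u (j + i)
  | 0, _ => by simp
  | k + 1, hk => by
    have hA : A *ᵥ ∑ i ∈ range k, (A ^ (k - 1 - i) * B) *ᵥ u (j + i) =
        ∑ i ∈ range k, (A ^ (k + 1 - 1 - i) * B) *ᵥ u (j + i) := by
      rw [mulVec_sum]
      refine sum_congr rfl fun i hi => ?_
      rw [mulVec_mulVec, ← Matrix.mul_assoc, ← pow_succ',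
        show k - 1 - i + 1 = k + 1 - 1 - i by have := mem_range.mp hi; omega]
    rw [← add_assoc, hx _ (by omega), state_eq_pow_mulVec_add_sum hx k (by omega), mulVec_add,
      hA, mulVec_mulVec, ← pow_succ', sum_range_succ, Nat.add_sub_cancel, Nat.sub_self, pow_zero,
      Matrix.one_mul, add_assoc]

lemma obsMat_mulVec_apply (A : Matrix (Fin nx) (Fin nx) ℝ) (C : Matrix (Fin ny) (Fin nx) ℝ)
    (i : ℕ) (v : Fin nx → ℝ) (p : Fin i × Fin ny) :
    (obsMat A C i *ᵥ v) p = ((C * A ^ (p.1 : ℕ)) *ᵥ v) p.2 :=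
  rfl

namespace IsStateTraj

variable {T : ℕ} {u u' : ℕ → Fin nu → ℝ} {y y' : ℕ → Fin ny → ℝ} {x x' : ℕ → Fin nx → ℝ}

lemma shiftSum (h : IsStateTraj A B C D T u y x) {L K : ℕ} (hK : L + K ≤ T + 1)
    (g : Fin K → ℝ) :
    IsStateTraj A B C D L (shiftSum u g) (shiftSum y g) (shiftSum x g) := by
  intro t ht
  have hwindow (j : Fin K) : t + j < T := by omega
  simp only [DDSim.shiftSum, mulVec_sum, mulVec_smul, ← sum_add_distrib, ← smul_add]
  refine ⟨sum_congr rfl fun j _ => ?_, sum_congr rfl fun j _ => ?_⟩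
  · rw [add_right_comm, (h _ (hwindow j)).1]
  · rw [(h _ (hwindow j)).2]

lemma mono (h : IsStateTraj A B C D T u y x) {S : ℕ} (hST : S ≤ T) :
    IsStateTraj A B C D S u y x :=
  fun t ht => h t (by omega)

lemma sub (h : IsStateTraj A B C D T u y x) (h' : IsStateTraj A B C D T u' y' x') :
    IsStateTraj A B C D T (u - u') (y - y') (x - x') := by
  intro t ht
  simp only [Pi.sub_apply, mulVec_sub, (h t ht).1, (h' t ht).1, (h t ht).2, (h' t ht).2]
  constructor <;> abel

lemma output_eq_of_input_eq_zero (h : IsStateTraj A B C D T u y x) (hu : ∀ t < T, u t = 0) :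
    ∀ t < T, y t = (C * A ^ t) *ᵥ x 0 := by
  intro t ht
  have hx := state_eq_pow_mulVec_add_sum (fun s hs => (h s hs).1) (j := 0) t (by omega)
  rw [sum_eq_zero fun i hi => by rw [zero_add, hu i (by have := mem_range.mp hi; omega),
    mulVec_zero], add_zero, zero_add] at hx
  rw [(h t ht).2, hu t ht, mulVec_zero, add_zero, hx, mulVec_mulVec]

lemma output_eq_of_init_eq (h : IsStateTraj A B C D T u y x)
    (h' : IsStateTraj A B C D T u' y' x') (hu : ∀ t < T, u t = u' t) (hx : x 0 = x' 0) :
    ∀ t < T, y t = y' t := by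
  intro t ht
  have := (h.sub h').output_eq_of_input_eq_zero (fun s hs => sub_eq_zero.mpr (hu s hs)) t ht
  rwa [Pi.sub_apply, Pi.sub_apply, hx, sub_self, mulVec_zero, sub_eq_zero] at this

lemma output_eq_of_obsMat {l L₀ : ℕ} (hobs : Function.Injective (obsMat A C l).mulVec)
    (hl : l ≤ L₀) (hL₀ : L₀ ≤ T) (h : IsStateTraj A B C D T u y x)
    (h' : IsStateTraj A B C D T u' y' x') (hu : ∀ t < T, u t = u' t)
    (hy : ∀ t < L₀, y t = y' t) : ∀ t < T, y t = y' t := by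
  have hfree := (h.sub h').output_eq_of_input_eq_zero (fun s hs => sub_eq_zero.mpr (hu s hs))
  refine h.output_eq_of_init_eq h' hu (sub_eq_zero.mp (hobs ?_))
  ext p
  rw [mulVec_zero]
  have hp : (p.1 : ℕ) < L₀ := by omega
  have := congrFun (hfree p.1 (by omega)) p.2
  rw [Pi.sub_apply, hy p.1 hp, sub_self] at this
  rw [obsMat_mulVec_apply]
  exact this.symm

end IsStateTraj

end StateSpace

section FundamentalLemma

variable {nx nu N L : ℕ} {A : Matrix (Fin nx) (Fin nx) ℝ} {B : Matrix (Fin nx) (Fin nu) ℝ}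
  {ud : ℕ → Fin nu → ℝ} {xd : ℕ → Fin nx → ℝ} {ξ : Fin nx → ℝ} {ζ : ℕ → Fin nu → ℝ}

/-- With `ξ Aᵏ` as state part, the row `(ξ A^{k-1} B, …, ξ B, ζ₀, ζ₁, …)` is what a left-kernel
vector `(ξ, ζ)` of `[X₀; H_L(u)]` becomes after substituting the state equation `k` times. -/
def shiftedRow (A : Matrix (Fin nx) (Fin nx) ℝ) (B : Matrix (Fin nx) (Fin nu) ℝ)
    (ξ : Fin nx → ℝ) (ζ : ℕ → Fin nu → ℝ) (k m : ℕ) : Fin nu → ℝ :=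
  if m < k then ξ ᵥ* (A ^ (k - 1 - m) * B) else ζ (m - k)

lemma annihilates_shiftedRow (hxd : ∀ t < N, xd (t + 1) = A *ᵥ xd t + B *ᵥ ud t)
    (hζ : ∀ t ≥ L, ζ t = 0)
    (hann : ∀ j ≤ N - L, ξ ⬝ᵥ xd j + ∑ t ∈ range L, ζ t ⬝ᵥ ud (t + j) = 0)
    {k j n : ℕ} (hj : j + k ≤ N - L) (hn : L + k ≤ n) :
    (ξ ᵥ* A ^ k) ⬝ᵥ xd j + ∑ m ∈ range n, shiftedRow A B ξ ζ k m ⬝ᵥ ud (m + j) = 0 := by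
  have hsplit : ∑ m ∈ range n, shiftedRow A B ξ ζ k m ⬝ᵥ ud (m + j) =
      ∑ i ∈ range k, (ξ ᵥ* (A ^ (k - 1 - i) * B)) ⬝ᵥ ud (j + i) +
        ∑ t ∈ range L, ζ t ⬝ᵥ ud (t + (j + k)) := by
    rw [← Nat.add_sub_cancel' (show k ≤ n by omega), sum_range_add]
    congr 1
    · refine sum_congr rfl fun i hi => ?_
      rw [shiftedRow, if_pos (mem_range.mp hi), add_comm]
    · simp only [shiftedRow, Nat.not_lt.mpr (Nat.le_add_right k _), if_false,
        Nat.add_sub_cancel_left, show ∀ t, k + t + j = t + (j + k) by omega]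
      exact eventually_constant_sum (fun t ht => by rw [hζ t ht, zero_dotProduct]) (by omega)
  have hstate : ξ ⬝ᵥ xd (j + k) = (ξ ᵥ* A ^ k) ⬝ᵥ xd j +
      ∑ i ∈ range k, (ξ ᵥ* (A ^ (k - 1 - i) * B)) ⬝ᵥ ud (j + i) := by
    rw [state_eq_pow_mulVec_add_sum hxd k (show j + k ≤ N by omega)]
    simp only [dotProduct_add, dotProduct_sum, dotProduct_mulVec]
  linarith [hann (j + k) (by omega)]

/-- By Cayley–Hamilton the state part `ξ χ_A(A)` of this combination vanishes, so it lies in the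
left kernel of `H_{L+nₓ}(u)`. -/
noncomputable def charpolyShiftedRow (A : Matrix (Fin nx) (Fin nx) ℝ)
    (B : Matrix (Fin nx) (Fin nu) ℝ) (ξ : Fin nx → ℝ) (ζ : ℕ → Fin nu → ℝ) (m : ℕ) : Fin nu → ℝ :=
  ∑ k ∈ range (nx + 1), A.charpoly.coeff k • shiftedRow A B ξ ζ k m

lemma charpolyShiftedRow_eq (m : ℕ) : charpolyShiftedRow A B ξ ζ m =
    shiftedRow A B ξ ζ nx m + ∑ k ∈ range nx, A.charpoly.coeff k • shiftedRow A B ξ ζ k m := by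
  have hmonic : A.charpoly.coeff nx = 1 := by
    simpa using A.charpoly_monic.coeff_natDegree
  rw [charpolyShiftedRow, sum_range_succ, hmonic, one_smul, add_comm]

lemma charpolyShiftedRow_eq_zero (hxd : ∀ t < N, xd (t + 1) = A *ᵥ xd t + B *ᵥ ud t)
    (hLN : L + nx ≤ N) (hPE : (hankel ud (L + nx) N).rank = (L + nx) * nu)
    (hζ : ∀ t ≥ L, ζ t = 0)
    (hann : ∀ j ≤ N - L, ξ ⬝ᵥ xd j + ∑ t ∈ range L, ζ t ⬝ᵥ ud (t + j) = 0) :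
    ∀ m < L + nx, charpolyShiftedRow A B ξ ζ m = 0 := by
  have hcol (j : ℕ) (hj : j ≤ N - (L + nx)) :
      ∑ m ∈ range (L + nx), charpolyShiftedRow A B ξ ζ m ⬝ᵥ ud (m + j) = 0 :=
    calc ∑ m ∈ range (L + nx), charpolyShiftedRow A B ξ ζ m ⬝ᵥ ud (m + j)
        = ∑ k ∈ range (nx + 1), A.charpoly.coeff k *
            ∑ m ∈ range (L + nx), shiftedRow A B ξ ζ k m ⬝ᵥ ud (m + j) := by
          simp only [charpolyShiftedRow, sum_dotProduct, smul_dotProduct, smul_eq_mul, mul_sum]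
          exact sum_comm
      _ = ∑ k ∈ range (nx + 1), A.charpoly.coeff k * -((ξ ᵥ* A ^ k) ⬝ᵥ xd j) := by
          refine sum_congr rfl fun k hk => ?_
          have hk : k ≤ nx := Nat.lt_succ_iff.mp (mem_range.mp hk)
          rw [eq_neg_of_add_eq_zero_right
            (annihilates_shiftedRow hxd hζ hann (by omega) (by omega))]
      _ = -((ξ ᵥ* ∑ k ∈ range (nx + 1), A.charpoly.coeff k • A ^ k) ⬝ᵥ xd j) := by
          simp only [vecMul_sum, vecMul_smul, sum_dotProduct, smul_dotProduct, smul_eq_mul,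
            mul_neg, sum_neg_distrib]
      _ = 0 := by
          rw [sum_charpoly_coeff_smul_pow_eq_zero, vecMul_zero, zero_dotProduct, neg_zero]
  have hPEinj := vecMul_injective_of_rank_eq_card_rows (M := hankel ud (L + nx) N) (by simp [hPE])
  have hzero : (fun p : Fin (L + nx) × Fin nu => charpolyShiftedRow A B ξ ζ p.1 p.2) = 0 := by
    refine hPEinj ?_
    dsimp only
    rw [hankel_eq_blockRows, vecMul_blockRows, zero_vecMul]
    ext j
    simpa using hcol j (by omega)
  exact fun m hm => funext fun i => congrFun hzero (⟨m, hm⟩, i)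

lemma eq_zero_of_charpolyShiftedRow_eq_zero (hζ : ∀ t ≥ L, ζ t = 0)
    (hβ : ∀ m < L + nx, charpolyShiftedRow A B ξ ζ m = 0) : ∀ t, ζ t = 0 := by
  suffices h : ∀ r t, L ≤ t + r → ζ t = 0 from fun t => h L t (by omega)
  intro r
  induction r with
  | zero => exact hζ
  | succ r ih =>
    intro t ht
    by_cases htr : L ≤ t + r
    · exact ih t htr
    -- row `t + nₓ` of the combination is `ζ t` plus multiples of `ζ s` with `s > t`
    have hrest : ∀ k ∈ range nx, A.charpoly.coeff k • shiftedRow A B ξ ζ k (t + nx) = 0 := by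
      intro k hk
      have hk : k < nx := mem_range.mp hk
      rw [shiftedRow, if_neg (by omega), ih _ (by omega), smul_zero]
    have := hβ (t + nx) (by omega)
    rwa [charpolyShiftedRow_eq, sum_eq_zero hrest, add_zero, shiftedRow, if_neg (by omega),
      Nat.add_sub_cancel] at this

lemma vecMul_ctrbMat_eq_zero (hζ : ∀ t, ζ t = 0)
    (hβ : ∀ m < nx, charpolyShiftedRow A B ξ ζ m = 0) : ξ ᵥ* ctrbMat A B = 0 := by
  have hpow : ∀ r < nx, ξ ᵥ* (A ^ r * B) = 0 := by
    intro r
    induction r using Nat.strong_induction_on with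
    | _ r ih =>
      intro hr
      -- row `nₓ - 1 - r` of the combination is `ξ Aʳ B` plus multiples of `ξ Aˢ B` with `s < r`
      have hrest : ∀ k ∈ range nx,
          A.charpoly.coeff k • shiftedRow A B ξ ζ k (nx - 1 - r) = 0 := by
        intro k hk
        have hk : k < nx := mem_range.mp hk
        unfold shiftedRow
        split_ifs
        · rw [ih _ (by omega) (by omega), smul_zero]
        · rw [hζ, smul_zero]
      have := hβ (nx - 1 - r) (by omega)
      rwa [charpolyShiftedRow_eq, sum_eq_zero hrest, add_zero, shiftedRow, if_pos (by omega),
        show nx - 1 - (nx - 1 - r) = r by omega] at this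
  ext p
  exact congrFun (hpow p.1 p.1.isLt) p.2

theorem eq_zero_of_annihilates_stateHankel (hctrb : (ctrbMat A B).rank = nx)
    (hxd : ∀ t < N, xd (t + 1) = A *ᵥ xd t + B *ᵥ ud t) (hLN : L + nx ≤ N)
    (hPE : (hankel ud (L + nx) N).rank = (L + nx) * nu) (hζ : ∀ t ≥ L, ζ t = 0)
    (hann : ∀ j ≤ N - L, ξ ⬝ᵥ xd j + ∑ t ∈ range L, ζ t ⬝ᵥ ud (t + j) = 0) :
    ξ = 0 ∧ ∀ t, ζ t = 0 := by
  have hβ := charpolyShiftedRow_eq_zero hxd hLN hPE hζ hann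
  have hζ0 := eq_zero_of_charpolyShiftedRow_eq_zero hζ hβ
  have hctrbinj := vecMul_injective_of_rank_eq_card_rows (M := ctrbMat A B) (by simpa using hctrb)
  refine ⟨hctrbinj ?_, hζ0⟩
  dsimp only
  rw [vecMul_ctrbMat_eq_zero hζ0 fun m hm => hβ m (by omega), zero_vecMul]

theorem mulVec_fromRows_states_blockRows_surjective (hctrb : (ctrbMat A B).rank = nx)
    (hxd : ∀ t < N, xd (t + 1) = A *ᵥ xd t + B *ᵥ ud t) (hLN : L + nx ≤ N)
    (hPE : (hankel ud (L + nx) N).rank = (L + nx) * nu) :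
    Function.Surjective (fromRows (of fun k (j : Fin (N - L + 1)) => xd j k)
      (blockRows ud 0 L (N - L + 1))).mulVec := by
  set M := fromRows (of fun k (j : Fin (N - L + 1)) => xd j k) (blockRows ud 0 L (N - L + 1))
    with hM
  refine mulVec_surjective_of_vecMul_injective fun a b hab => sub_eq_zero.mp ?_
  set η := a - b
  have hη : Sum.elim (η ∘ Sum.inl) (fun p => blockSeq (η ∘ Sum.inr) p.1 p.2) = η := by
    rw [blockSeq_eta, Sum.elim_comp_inl_inr]
  have hker : η ᵥ* M = 0 := by rw [sub_vecMul]; exact sub_eq_zero.mpr hab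
  rw [← hη, hM, sumElim_vecMul_fromRows, vecMul_blockRows] at hker
  have hann (j : ℕ) (hj : j ≤ N - L) : (η ∘ Sum.inl) ⬝ᵥ xd j +
      ∑ t ∈ range L, blockSeq (η ∘ Sum.inr) t ⬝ᵥ ud (t + j) = 0 := by
    simpa [vecMul, dotProduct] using congrFun hker ⟨j, by omega⟩
  obtain ⟨hξ, hζ⟩ := eq_zero_of_annihilates_stateHankel hctrb hxd hLN hPE
    (fun t ht => blockSeq_of_le _ ht) hann
  rw [← hη, hξ]
  ext (_ | _) <;> simp [hζ]

theorem exists_shiftSum_eq (hctrb : (ctrbMat A B).rank = nx)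
    (hxd : ∀ t < N, xd (t + 1) = A *ᵥ xd t + B *ᵥ ud t) (hLN : L + nx ≤ N)
    (hPE : (hankel ud (L + nx) N).rank = (L + nx) * nu) (x₀ : Fin nx → ℝ)
    (v : ℕ → Fin nu → ℝ) :
    ∃ g : Fin (N - L + 1) → ℝ, shiftSum xd g 0 = x₀ ∧ ∀ t < L, shiftSum ud g t = v t := by
  obtain ⟨g, hg⟩ := mulVec_fromRows_states_blockRows_surjective hctrb hxd hLN hPE
    (Sum.elim x₀ fun p => v p.1 p.2)
  rw [fromRows_mulVec, Sum.elim_eq_iff, blockRows_mulVec_eq_iff] at hg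
  refine ⟨g, ?_, fun t ht => by simpa using hg.2 t ht⟩
  rw [← hg.1]
  ext k
  simp [shiftSum, mulVec, dotProduct, mul_comm]

end FundamentalLemma

theorem dd_sim_hankel_general
    {nx nu ny : ℕ}
    (A : Matrix (Fin nx) (Fin nx) ℝ) (B : Matrix (Fin nx) (Fin nu) ℝ)
    (C : Matrix (Fin ny) (Fin nx) ℝ) (D : Matrix (Fin ny) (Fin nu) ℝ)
    -- minimality: controllability and observability
    (hctrb : (ctrbMat A B).rank = nx)
    -- `l` is the lag of the system
    (l : ℕ) (hlagrank : (obsMat A C l).rank = nx)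
    (N L0 Ls : ℕ) (hL0 : l ≤ L0) (hLN : L0 + Ls + nx ≤ N)
    -- the data trajectory
    (ud : ℕ → Fin nu → ℝ) (yd : ℕ → Fin ny → ℝ)
    (hdata : IsTraj A B C D N ud yd)
    -- the initial trajectory
    (uini : ℕ → Fin nu → ℝ) (yini : ℕ → Fin ny → ℝ)
    (hini : IsTraj A B C D L0 uini yini)
    -- the simulated input
    (us : ℕ → Fin nu → ℝ)
    -- persistence of excitation of order `L + n_x`
    (hPE : (hankel ud (L0 + Ls + nx) N).rank = (L0 + Ls + nx) * nu) :
    (∃ g : Fin (N - (L0 + Ls) + 1) → ℝ,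
      (blockRows ud 0 L0 (N - (L0 + Ls) + 1)).mulVec g = (fun p => uini p.1 p.2) ∧
      (blockRows yd 0 L0 (N - (L0 + Ls) + 1)).mulVec g = (fun p => yini p.1 p.2) ∧
      (blockRows ud L0 Ls (N - (L0 + Ls) + 1)).mulVec g = (fun p => us p.1 p.2)) ∧
    (∀ g : Fin (N - (L0 + Ls) + 1) → ℝ,
      (blockRows ud 0 L0 (N - (L0 + Ls) + 1)).mulVec g = (fun p => uini p.1 p.2) →
      (blockRows yd 0 L0 (N - (L0 + Ls) + 1)).mulVec g = (fun p => yini p.1 p.2) →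
      (blockRows ud L0 Ls (N - (L0 + Ls) + 1)).mulVec g = (fun p => us p.1 p.2) →
      ∀ ys : ℕ → Fin ny → ℝ,
        IsTraj A B C D (L0 + Ls)
          (fun t => if t < L0 then uini t else us (t - L0))
          (fun t => if t < L0 then yini t else ys (t - L0)) →
        (fun p : Fin Ls × Fin ny => ys p.1 p.2) =
          (blockRows yd L0 Ls (N - (L0 + Ls) + 1)).mulVec g) := by
  obtain ⟨xd, hxd⟩ := hdata
  obtain ⟨xini, hxini⟩ := hini
  have hobsinj : Function.Injective (obsMat A C l).mulVec :=
    mulVec_injective_of_rank_eq_card_cols (by simpa using hlagrank)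
  have hsim (g : Fin (N - (L0 + Ls) + 1) → ℝ) := hxd.shiftSum (L := L0 + Ls) (by omega) g
  refine ⟨?_, ?_⟩
  · obtain ⟨g, hgx, hgu⟩ := exists_shiftSum_eq hctrb (fun t ht => (hxd t ht).1) hLN hPE (xini 0)
      (fun t => if t < L0 then uini t else us (t - L0))
    have hyini := ((hsim g).mono (Nat.le_add_right L0 Ls)).output_eq_of_init_eq hxini
      (fun t ht => by simpa [ht] using hgu t (by omega)) hgx
    refine ⟨g, blockRows_mulVec_eq_iff.2 fun t ht => ?_, blockRows_mulVec_eq_iff.2 fun t ht => ?_,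
      blockRows_mulVec_eq_iff.2 fun t ht => ?_⟩
    · simpa [ht] using hgu t (by omega)
    · simpa using hyini t ht
    · simpa using hgu (L0 + t) (by omega)
  · intro g hu hy hus ys ⟨xc, hxc⟩
    rw [blockRows_mulVec_eq_iff] at hu hy hus
    have hinput (t : ℕ) (ht : t < L0 + Ls) :
        shiftSum ud g t = if t < L0 then uini t else us (t - L0) := by
      split_ifs with htL0
      · simpa using hu t htL0
      · simpa [Nat.add_sub_cancel' (Nat.not_lt.mp htL0)] using hus (t - L0) (by omega)
    have hys := (hsim g).output_eq_of_obsMat hobsinj hL0 (Nat.le_add_right L0 Ls) hxc hinput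
      (fun t ht => by simpa [ht] using hy t ht)
    refine (blockRows_mulVec_eq_iff.2 fun t ht => ?_).symm
    simpa using hys (L0 + t) (by omega)

/-- Data-driven simulation with Hankel matrices (Markovsky–Rapisarda / Fundamental Lemma):
if the data input is persistently exciting of order `L + n_x` and the system is controllable
and observable with lag `l ≤ L_0`, then (i) a preimage `g` of
`(u_ini, y_ini, u_s)` under `[U_p; Y_p; U_f]` exists, and (ii) for every such `g`, the unique
simulated output satisfies `y_s = Y_f g`. -/
theorem dd_sim_hankel
    {nx nu ny : ℕ} (hnu : 1 ≤ nu)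
    (A : Matrix (Fin nx) (Fin nx) ℝ) (B : Matrix (Fin nx) (Fin nu) ℝ)
    (C : Matrix (Fin ny) (Fin nx) ℝ) (D : Matrix (Fin ny) (Fin nu) ℝ)
    -- minimality: controllability and observability
    (hctrb : (ctrbMat A B).rank = nx)
    (hobs : (obsMat A C nx).rank = nx)
    -- `l` is the lag of the system
    (l : ℕ) (hlagrank : (obsMat A C l).rank = nx)
    (hlagmin : ∀ i < l, (obsMat A C i).rank ≠ nx)
    (N L0 Ls : ℕ) (hL0 : l ≤ L0) (hLN : L0 + Ls + nx ≤ N)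
    -- the data trajectory
    (ud : ℕ → Fin nu → ℝ) (yd : ℕ → Fin ny → ℝ)
    (hdata : IsTraj A B C D N ud yd)
    -- the initial trajectory
    (uini : ℕ → Fin nu → ℝ) (yini : ℕ → Fin ny → ℝ)
    (hini : IsTraj A B C D L0 uini yini)
    -- the simulated input
    (us : ℕ → Fin nu → ℝ)
    -- persistence of excitation of order `L + n_x`
    (hPE : (hankel ud (L0 + Ls + nx) N).rank = (L0 + Ls + nx) * nu) :
    (∃ g : Fin (N - (L0 + Ls) + 1) → ℝ,
      (blockRows ud 0 L0 (N - (L0 + Ls) + 1)).mulVec g = (fun p => uini p.1 p.2) ∧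
      (blockRows yd 0 L0 (N - (L0 + Ls) + 1)).mulVec g = (fun p => yini p.1 p.2) ∧
      (blockRows ud L0 Ls (N - (L0 + Ls) + 1)).mulVec g = (fun p => us p.1 p.2)) ∧
    (∀ g : Fin (N - (L0 + Ls) + 1) → ℝ,
      (blockRows ud 0 L0 (N - (L0 + Ls) + 1)).mulVec g = (fun p => uini p.1 p.2) →
      (blockRows yd 0 L0 (N - (L0 + Ls) + 1)).mulVec g = (fun p => yini p.1 p.2) →
      (blockRows ud L0 Ls (N - (L0 + Ls) + 1)).mulVec g = (fun p => us p.1 p.2) →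
      ∀ ys : ℕ → Fin ny → ℝ,
        IsTraj A B C D (L0 + Ls)
          (fun t => if t < L0 then uini t else us (t - L0))
          (fun t => if t < L0 then yini t else ys (t - L0)) →
        (fun p : Fin Ls × Fin ny => ys p.1 p.2) =
          (blockRows yd L0 Ls (N - (L0 + Ls) + 1)).mulVec g) :=
  dd_sim_hankel_general A B C D hctrb l hlagrank N L0 Ls hL0 hLN ud yd hdata uini yini hini us hPE

end DDSim
end

section
/- Let (A,B,C,D) be a controllable and observable (minimal) LTI system with state dimension n_x and lag l. Let (u_d, y_d) be a trajectory of the system of length N, let (u_ini, y_ini) be a trajectory of the system of length L_0 with L_0 ≥ l, let u_s be an input sequence of length L_s, and set L = L_0 + L_s. Assume u_d is L-Page exciting of order n_x + 1. Partition the block Page matrices 𝓟_L(u_d) = [U_p; U_f] and 𝓟_L(y_d) = [Y_p; Y_f], where U_p, Y_p contain the first L_0 block rows and U_f, Y_f the last L_s block rows. Then: (i) there exists a vector g ∈ ℝ^{⌊N/L⌋} such that U_p g = u_ini, Y_p g = y_ini, and U_f g = u_s; and (ii) for every such g and for every output sequence y_s of length L_s such that the concatenated sequences (u_ini followed by u_s,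 y_ini followed by y_s) form a trajectory of the system, one has y_s = Y_f g (stacked as a vector). -/
open Matrix Finset

set_option linter.unusedSectionVars false
set_option maxHeartbeats 1000000

namespace DDSim

/-- Block of `rows` consecutive block rows (starting at block-row shift `off`) of the block Page
matrix of depth `L` with `cols` columns: `(i, j)` block entry `z_{jL + off + i}`. -/
def pageBlock {nz : ℕ} (z : ℕ → Fin nz → ℝ) (off rows L cols : ℕ) :
    Matrix (Fin rows × Fin nz) (Fin cols) ℝ :=
  fun p j => z ((j : ℕ) * L + off + (p.1 : ℕ)) p.2

/-- The matrix stacking the `M` depth-`L` block Page matrices of the shifted subsequences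
`z_{[kL, ⌊N/L⌋L - 1 - (M-1-k)L]}`, `k = 0, …, M-1`, each with `⌊N/L⌋ - (M-1)` block columns:
entry at row `(k, i)` (block) and column `j` is `z_{kL + jL + i}`. -/
def pageStack {nz : ℕ} (z : ℕ → Fin nz → ℝ) (L N M : ℕ) :
    Matrix (Fin M × (Fin L × Fin nz)) (Fin (N / L - (M - 1))) ℝ :=
  fun p j => z ((p.1 : ℕ) * L + (j : ℕ) * L + (p.2.1 : ℕ)) p.2.2

section Aux

variable {m n : Type*} [Fintype m] [Fintype n] [DecidableEq m] [DecidableEq n]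

lemma aux_rank_rows (H : Matrix m n ℝ) (h : ∀ w, w ᵥ* H = 0 → w = 0) :
    H.rank = Fintype.card m := by
  rw [← H.rank_transpose]
  have hk : LinearMap.ker Hᵀ.mulVecLin = ⊥ := by
    rw [LinearMap.ker_eq_bot']
    intro w hw
    exact h w (by rwa [Hᵀ.mulVecLin_apply, mulVec_transpose] at hw)
  have := LinearMap.finrank_range_add_finrank_ker Hᵀ.mulVecLin
  rw [hk, finrank_bot, add_zero, Module.finrank_pi] at this
  exact this

lemma aux_surj (H : Matrix m n ℝ) (h : H.rank = Fintype.card m) (v : m → ℝ) :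
    ∃ g, H.mulVec g = v := by
  have : LinearMap.range H.mulVecLin = ⊤ := by
    apply Submodule.eq_top_of_finrank_eq
    rw [← Matrix.rank, h, Module.finrank_pi]
  exact (LinearMap.range_eq_top.mp this v).imp (fun g hg => hg)

lemma aux_inj (H : Matrix m n ℝ) (h : H.rank = Fintype.card n) (z : n → ℝ)
    (hz : H.mulVec z = 0) : z = 0 := by
  have hk := LinearMap.finrank_range_add_finrank_ker H.mulVecLin
  rw [show Module.finrank ℝ ↥(LinearMap.range H.mulVecLin) = H.rank from rfl, h,
    Module.finrank_pi] at hk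
  have hbot : LinearMap.ker H.mulVecLin = ⊥ := Submodule.finrank_eq_zero.mp (by simpa using hk)
  have : z ∈ LinearMap.ker H.mulVecLin := by simpa [Matrix.mulVecLin_apply] using hz
  rw [hbot] at this
  simpa using this

lemma aux_left_inj (H : Matrix m n ℝ) (h : H.rank = Fintype.card m) (w : m → ℝ)
    (hw : w ᵥ* H = 0) : w = 0 :=
  aux_inj Hᵀ (by rwa [rank_transpose]) w (by rwa [mulVec_transpose])

lemma aux_rollout {ι κ : Type*} [Fintype ι] [Fintype κ] [DecidableEq ι]
    (A' : Matrix ι ι ℝ) (B' : Matrix ι κ ℝ) (v : ℕ → ι → ℝ) (w : ℕ → κ → ℝ)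
    (J : ℕ) (hstep : ∀ j < J, v (j + 1) = A'.mulVec (v j) + B'.mulVec (w j)) :
    ∀ s t, s + t ≤ J → v (s + t) = (A' ^ t).mulVec (v s) +
      ∑ m ∈ range t, ((A' ^ (t - 1 - m)) * B').mulVec (w (s + m)) := by
  intro s t
  induction t with
  | zero => simp
  | succ t ih =>
    intro hT
    have h1 : v (s + t + 1) = A'.mulVec (v (s + t)) + B'.mulVec (w (s + t)) :=
      hstep (s + t) (by omega)
    have h2 := ih (by omega)
    rw [show s + (t + 1) = s + t + 1 by omega, h1, h2, Matrix.mulVec_add, sum_range_succ]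
    rw [Matrix.mulVec_mulVec, ← pow_succ']
    have h3 : A'.mulVec ((∑ m ∈ range t, ((A' ^ (t - 1 - m)) * B').mulVec (w (s + m)))) =
        ∑ m ∈ range t, ((A' ^ (t + 1 - 1 - m)) * B').mulVec (w (s + m)) := by
      rw [← A'.mulVecLin_apply, map_sum]
      refine sum_congr rfl fun m hm => ?_
      have hm' := mem_range.mp hm
      rw [Matrix.mulVecLin_apply, Matrix.mulVec_mulVec, ← Matrix.mul_assoc, ← pow_succ']
      show (A' ^ (t - 1 - m + 1) * B').mulVec (w (s+m)) = _
      rw [show t - 1 - m + 1 = t + 1 - 1 - m by omega]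
    rw [h3]
    simp [Matrix.one_mul]
    abel

end Aux

variable {nx nu ny : ℕ}

/-- simulated output from initial state `z` and input `v`. -/
def simOut (A : Matrix (Fin nx) (Fin nx) ℝ) (B : Matrix (Fin nx) (Fin nu) ℝ)
    (C : Matrix (Fin ny) (Fin nx) ℝ) (D : Matrix (Fin ny) (Fin nu) ℝ)
    (z : Fin nx → ℝ) (v : ℕ → Fin nu → ℝ) (t : ℕ) : Fin ny → ℝ :=
  (C * A ^ t).mulVec z + ∑ m ∈ range t, (C * A ^ (t - 1 - m) * B).mulVec (v m)
    + D.mulVec (v t)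

lemma simOut_congr {A : Matrix (Fin nx) (Fin nx) ℝ} {B : Matrix (Fin nx) (Fin nu) ℝ}
    {C : Matrix (Fin ny) (Fin nx) ℝ} {D : Matrix (Fin ny) (Fin nu) ℝ}
    {z z' : Fin nx → ℝ} {v v' : ℕ → Fin nu → ℝ} {t : ℕ}
    (hz : z = z') (hv : ∀ m ≤ t, v m = v' m) :
    simOut A B C D z v t = simOut A B C D z' v' t := by
  unfold simOut
  rw [hz, hv t le_rfl]
  congr 2
  refine sum_congr rfl fun m hm => ?_
  rw [hv m (le_of_lt (mem_range.mp hm))]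

lemma aux_out {A : Matrix (Fin nx) (Fin nx) ℝ} {B : Matrix (Fin nx) (Fin nu) ℝ}
    {C : Matrix (Fin ny) (Fin nx) ℝ} {D : Matrix (Fin ny) (Fin nu) ℝ}
    {T : ℕ} {u : ℕ → Fin nu → ℝ} {y : ℕ → Fin ny → ℝ} {x : ℕ → Fin nx → ℝ}
    (h : IsStateTraj A B C D T u y x) (s t : ℕ) (hT : s + t < T) :
    y (s + t) = simOut A B C D (x s) (fun m => u (s + m)) t := by
  have hroll := aux_rollout A B x u T (fun j hj => (h j hj).1) s t (le_of_lt hT)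
  have hout := (h (s + t) hT).2
  rw [hout, hroll, Matrix.mulVec_add, Matrix.mulVec_mulVec]
  unfold simOut
  congr 1
  congr 1
  rw [← C.mulVecLin_apply, map_sum]
  refine sum_congr rfl fun m hm => ?_
  rw [Matrix.mulVecLin_apply, Matrix.mulVec_mulVec, ← Matrix.mul_assoc]

lemma aux_key_lin {K : ℕ} (A : Matrix (Fin nx) (Fin nx) ℝ) (B : Matrix (Fin nx) (Fin nu) ℝ)
    (C : Matrix (Fin ny) (Fin nx) ℝ) (D : Matrix (Fin ny) (Fin nu) ℝ)
    (ud : ℕ → Fin nu → ℝ) (yd : ℕ → Fin ny → ℝ) (xd : ℕ → Fin nx → ℝ) (L N : ℕ)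
    (hx : IsStateTraj A B C D N ud yd xd) (hKL : K * L ≤ N) (g : Fin K → ℝ)
    (t : ℕ) (ht : t < L) :
    (fun c => ∑ j : Fin K, yd ((j : ℕ) * L + t) c * g j) =
      simOut A B C D (fun i => ∑ j : Fin K, xd ((j : ℕ) * L) i * g j)
        (fun m c => ∑ j : Fin K, ud ((j : ℕ) * L + m) c * g j) t := by
  funext c
  have hy : ∀ j : Fin K, yd ((j : ℕ) * L + t) = simOut A B C D (xd ((j : ℕ) * L))
      (fun m => ud ((j : ℕ) * L + m)) t := by
    intro j
    refine aux_out hx _ t ?_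
    have h1 : ((j : ℕ) + 1) * L ≤ K * L := Nat.mul_le_mul_right L j.isLt
    nlinarith [j.isLt]
  simp only [hy, simOut, Pi.add_apply, Matrix.mulVec, dotProduct, Finset.sum_apply,
    add_mul, Finset.sum_add_distrib, Finset.sum_mul, Finset.mul_sum]
  congr 1
  congr 1
  · rw [Finset.sum_comm]
    exact sum_congr rfl fun i _ => sum_congr rfl fun j _ => by ring
  · rw [Finset.sum_comm]
    refine sum_congr rfl fun m _ => ?_
    rw [Finset.sum_comm]
    exact sum_congr rfl fun d _ => sum_congr rfl fun j _ => by ring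
  · rw [Finset.sum_comm]
    exact sum_congr rfl fun d _ => sum_congr rfl fun j _ => by ring


lemma dot_sum {ι α : Type*} [Fintype ι] (v : ι → ℝ) (s : Finset α) (f : α → ι → ℝ) :
    v ⬝ᵥ (∑ a ∈ s, f a) = ∑ a ∈ s, v ⬝ᵥ f a := by
  simp only [dotProduct, Finset.sum_apply, Finset.mul_sum]
  rw [Finset.sum_comm]

lemma sum_mulVec' {ι ι' α : Type*} [Fintype ι'] (s : Finset α) (M : α → Matrix ι ι' ℝ)
    (x : ι' → ℝ) : (∑ a ∈ s, M a) *ᵥ x = ∑ a ∈ s, (M a) *ᵥ x := by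
  funext i
  simp only [Matrix.mulVec, dotProduct, Finset.sum_apply, Matrix.sum_apply, Finset.sum_mul]
  rw [Finset.sum_comm]

lemma tri_swap (n : ℕ) (F : ℕ → ℕ → ℝ) :
    ∑ k ∈ range (n + 1), ∑ m ∈ range k, F k m
      = ∑ k ∈ range (n + 1), ∑ d ∈ range (n - k), F (k + 1 + d) k := by
  rw [Finset.sum_sigma', Finset.sum_sigma']
  refine Finset.sum_nbij' (fun p => ⟨p.2, p.1 - 1 - p.2⟩) (fun p => ⟨p.1 + 1 + p.2, p.1⟩)
    ?_ ?_ ?_ ?_ ?_ <;> try (rintro ⟨p1, p2⟩ hp)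
  · simp only [Finset.mem_sigma, Finset.mem_range] at *
    omega
  · simp only [Finset.mem_sigma, Finset.mem_range] at *
    omega
  · simp only [Finset.mem_sigma, Finset.mem_range] at hp
    simp only [Sigma.mk.inj_iff]
    exact ⟨by omega, by first | exact HEq.rfl | exact heq_of_eq (by omega)⟩
  · simp only [Finset.mem_sigma, Finset.mem_range] at hp
    simp only [Sigma.mk.inj_iff]
    exact ⟨by first | trivial | omega, by first | exact HEq.rfl | exact heq_of_eq (by omega)⟩
  · simp only [Finset.mem_sigma, Finset.mem_range] at hp
    rw [show p2 + 1 + (p1 - 1 - p2) = p1 by omega]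



lemma aux_fund {nx nu : ℕ} (A : Matrix (Fin nx) (Fin nx) ℝ) (B : Matrix (Fin nx) (Fin nu) ℝ)
    (hctrb : (ctrbMat A B).rank = nx)
    (ud : ℕ → Fin nu → ℝ) (xd : ℕ → Fin nx → ℝ) (L N : ℕ) (hL : 0 < L)
    (hstepx : ∀ t < N, xd (t + 1) = A.mulVec (xd t) + B.mulVec (ud t))
    (hPE : (pageStack ud L N (nx + 1)).rank = (nx + 1) * (L * nu))
    (w : Fin nx ⊕ (Fin L × Fin nu) → ℝ)
    (hw : ∀ j : Fin (N / L),
      ((fun i => w (Sum.inl i)) ⬝ᵥ (fun i => xd ((j : ℕ) * L) i)) +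
      ((fun q => w (Sum.inr q)) ⬝ᵥ (fun q : Fin L × Fin nu => ud ((j : ℕ) * L + (q.1 : ℕ)) q.2)) = 0) :
    w = 0 := by
  set K := N / L with hK
  have hKL : K * L ≤ N := Nat.div_mul_le_self N L
  set ξ : Fin nx → ℝ := fun i => w (Sum.inl i) with hxi
  set ν : Fin L × Fin nu → ℝ := fun q => w (Sum.inr q) with hnu
  set colx : ℕ → Fin nx → ℝ := fun j i => xd (j * L) i with hcolx
  set colu : ℕ → Fin L × Fin nu → ℝ := fun j q => ud (j * L + (q.1 : ℕ)) q.2 with hcolu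
  set R : Matrix (Fin nx) (Fin L × Fin nu) ℝ :=
    fun i q => (A ^ (L - 1 - (q.1 : ℕ)) * B) i q.2 with hR
  have hsumR : ∀ z : ℕ, (∑ m ∈ range L, ((A ^ (L - 1 - m)) * B).mulVec (ud (z + m)))
      = R.mulVec (fun q : Fin L × Fin nu => ud (z + (q.1 : ℕ)) q.2) := by
    intro z
    funext i
    rw [Finset.sum_apply, ← Fin.sum_univ_eq_sum_range
      (fun m => (((A ^ (L - 1 - m)) * B).mulVec (ud (z + m))) i) L]
    simp [Matrix.mulVec, dotProduct, hR, Fintype.sum_prod_type]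
  have hstep : ∀ j < K, colx (j + 1) = (A ^ L).mulVec (colx j) + R.mulVec (colu j) := by
    intro j hj
    have hle : j * L + L ≤ N := by
      have h1 : (j + 1) * L ≤ K * L := Nat.mul_le_mul_right L hj
      nlinarith
    have hroll := aux_rollout A B xd ud N hstepx (j * L) L hle
    show xd ((j + 1) * L) = _
    rw [show (j + 1) * L = j * L + L by ring, hroll, hsumR (j * L)]
  have hrollK := aux_rollout (A ^ L) R colx colu K hstep
  set p := (A ^ L).charpoly with hp
  have hdeg : p.natDegree = nx := by
    rw [hp, Matrix.charpoly_natDegree_eq_dim, Fintype.card_fin]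
  have ha_nx : p.coeff nx = 1 := by
    have hm := (A ^ L).charpoly_monic
    rw [Polynomial.Monic, Polynomial.leadingCoeff, hdeg] at hm
    exact hm
  have hCH : ∑ k ∈ range (nx + 1), p.coeff k • (A ^ L) ^ k = 0 := by
    have h1 := (A ^ L).aeval_self_charpoly
    rw [Polynomial.aeval_eq_sum_range, hdeg] at h1
    exact h1
  set ξM : ℕ → Fin L × Fin nu → ℝ := fun d => ξ ᵥ* (((A ^ L) ^ d) * R) with hxiM
  set w' : Fin (nx + 1) × (Fin L × Fin nu) → ℝ :=
    fun pq => p.coeff (pq.1 : ℕ) * ν pq.2 +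
      ∑ d ∈ range (nx - (pq.1 : ℕ)), p.coeff ((pq.1 : ℕ) + 1 + d) * ξM d pq.2 with hw'
  have hw'0 : w' = 0 := by
    refine aux_left_inj (pageStack ud L N (nx + 1)) ?_ w' ?_
    · rw [hPE]
      simp
    funext j
    have hjK : (j : ℕ) + nx < K := by
      have := j.isLt
      omega
    have hentry : ∀ pq : Fin (nx + 1) × (Fin L × Fin nu),
        pageStack ud L N (nx + 1) pq j = colu ((j : ℕ) + (pq.1 : ℕ)) pq.2 := by
      intro pq
      show ud ((pq.1 : ℕ) * L + (j : ℕ) * L + (pq.2.1 : ℕ)) pq.2.2 = _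
      rw [show (pq.1 : ℕ) * L + (j : ℕ) * L + (pq.2.1 : ℕ)
        = ((j : ℕ) + (pq.1 : ℕ)) * L + (pq.2.1 : ℕ) by ring]
    have hE : ∀ k : ℕ, k ≤ nx → (ξ ⬝ᵥ colx ((j : ℕ) + k)) + (ν ⬝ᵥ colu ((j : ℕ) + k)) = 0 := by
      intro k hk
      have hlt : (j : ℕ) + k < K := by omega
      exact hw ⟨(j : ℕ) + k, hlt⟩
    have hexp : ∀ k : ℕ, k ≤ nx → ξ ⬝ᵥ colx ((j : ℕ) + k) =
        (ξ ᵥ* ((A ^ L) ^ k)) ⬝ᵥ colx (j : ℕ)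
          + ∑ m ∈ range k, ξM (k - 1 - m) ⬝ᵥ colu ((j : ℕ) + m) := by
      intro k hk
      rw [hrollK (j : ℕ) k (by omega), dotProduct_add, dotProduct_mulVec, dot_sum]
      congr 1
      refine sum_congr rfl fun m hm => ?_
      rw [dotProduct_mulVec]
    have hA : ∑ k ∈ range (nx + 1), p.coeff k *
        ((ξ ⬝ᵥ colx ((j : ℕ) + k)) + (ν ⬝ᵥ colu ((j : ℕ) + k))) = 0 := by
      refine Finset.sum_eq_zero fun k hk => ?_
      have := mem_range.mp hk
      rw [hE k (by omega), mul_zero]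
    show ∑ pq : Fin (nx+1) × (Fin L × Fin nu), w' pq * pageStack ud L N (nx + 1) pq j = 0
    have hsum0 : ∑ k ∈ range (nx + 1), p.coeff k * ((ξ ᵥ* ((A ^ L) ^ k)) ⬝ᵥ colx (j : ℕ)) = 0 := by
      have h1 : ∀ k, p.coeff k * ((ξ ᵥ* ((A ^ L) ^ k)) ⬝ᵥ colx (j : ℕ))
          = ξ ⬝ᵥ ((p.coeff k • ((A ^ L) ^ k)) *ᵥ colx (j : ℕ)) := by
        intro k
        rw [smul_mulVec, dotProduct_smul, dotProduct_mulVec, smul_eq_mul]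
      simp only [h1]
      rw [← dot_sum, ← sum_mulVec', hCH, Matrix.zero_mulVec, dotProduct_zero]
    have goalEq : ∑ pq : Fin (nx+1) × (Fin L × Fin nu), w' pq * pageStack ud L N (nx + 1) pq j
        = ∑ k ∈ range (nx + 1), (p.coeff k * (ν ⬝ᵥ colu ((j : ℕ) + k))
            + ∑ d ∈ range (nx - k), p.coeff (k + 1 + d) * (ξM d ⬝ᵥ colu ((j : ℕ) + k))) := by
      rw [Fintype.sum_prod_type]
      rw [← Fin.sum_univ_eq_sum_range (fun k => p.coeff k * (ν ⬝ᵥ colu ((j : ℕ) + k))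
            + ∑ d ∈ range (nx - k), p.coeff (k + 1 + d) * (ξM d ⬝ᵥ colu ((j : ℕ) + k))) (nx+1)]
      refine Finset.sum_congr rfl fun k _ => ?_
      simp only [hentry, hw']
      simp only [add_mul, Finset.sum_add_distrib, Finset.sum_mul, dotProduct, Finset.mul_sum]
      congr 1
      · exact sum_congr rfl fun q _ => by ring
      · rw [Finset.sum_comm]
        exact sum_congr rfl fun d _ => sum_congr rfl fun q _ => by ring
    rw [goalEq]
    have hA2 : ∑ k ∈ range (nx + 1), p.coeff k *
        ((ξ ᵥ* ((A ^ L) ^ k)) ⬝ᵥ colx (j : ℕ)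
          + (∑ m ∈ range k, ξM (k - 1 - m) ⬝ᵥ colu ((j : ℕ) + m))
          + ν ⬝ᵥ colu ((j : ℕ) + k)) = 0 := by
      refine Eq.trans (Finset.sum_congr rfl fun k hk => ?_) hA
      have hk' := mem_range.mp hk
      rw [← hexp k (by omega)]
    have hA3 : (∑ k ∈ range (nx + 1), p.coeff k * ((ξ ᵥ* ((A ^ L) ^ k)) ⬝ᵥ colx (j : ℕ)))
        + ((∑ k ∈ range (nx + 1), ∑ m ∈ range k,
              p.coeff k * (ξM (k - 1 - m) ⬝ᵥ colu ((j : ℕ) + m)))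
        + ∑ k ∈ range (nx + 1), p.coeff k * (ν ⬝ᵥ colu ((j : ℕ) + k))) = 0 := by
      rw [← Finset.sum_add_distrib, ← Finset.sum_add_distrib]
      refine Eq.trans (Finset.sum_congr rfl fun k hk => ?_) hA2
      simp only [mul_add, Finset.mul_sum]
      ring
    rw [hsum0, zero_add] at hA3
    rw [tri_swap nx (fun k m => p.coeff k * (ξM (k - 1 - m) ⬝ᵥ colu ((j : ℕ) + m)))] at hA3
    rw [Finset.sum_add_distrib]
    have hmass : (∑ k ∈ range (nx + 1), ∑ d ∈ range (nx - k),
          p.coeff (k + 1 + d) * (ξM d ⬝ᵥ colu ((j : ℕ) + k)))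
        = ∑ k ∈ range (nx + 1), ∑ d ∈ range (nx - k),
          p.coeff (k + 1 + d) * (ξM (k + 1 + d - 1 - k) ⬝ᵥ colu ((j : ℕ) + k)) := by
      refine sum_congr rfl fun k _ => sum_congr rfl fun d _ => ?_
      rw [show k + 1 + d - 1 - k = d by omega]
    rw [hmass]
    linarith [hA3]
  have hnu0 : ∀ q : Fin L × Fin nu, ν q = 0 := by
    intro q
    have h0 := congrFun hw'0 (⟨nx, by omega⟩, q)
    rw [hw'] at h0
    simp only [Pi.zero_apply] at h0
    simpa [ha_nx] using h0
  have hxiM0 : ∀ d, d < nx → ξM d = 0 := by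
    intro d
    induction d using Nat.strong_induction_on with
    | _ d ih =>
      intro hd
      funext q
      have h0 := congrFun hw'0 (⟨nx - 1 - d, by omega⟩, q)
      rw [hw'] at h0
      simp only [Pi.zero_apply] at h0
      rw [show nx - (nx - 1 - d) = d + 1 by omega, Finset.sum_range_succ] at h0
      rw [hnu0 q, mul_zero, zero_add] at h0
      rw [show nx - 1 - d + 1 + d = nx by omega, ha_nx, one_mul] at h0
      have hz : ∑ e ∈ range d, p.coeff (nx - 1 - d + 1 + e) * ξM e q = 0 := by
        refine Finset.sum_eq_zero fun e he => ?_
        have he' := mem_range.mp he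
        rw [ih e (by omega) (by omega)]
        simp
      rw [hz, zero_add] at h0
      simpa using h0
  have hAB : ∀ e' : ℕ, e' < nx * L → ξ ᵥ* (A ^ e' * B) = 0 := by
    intro e' he'
    have htlt : e' / L < nx := (Nat.div_lt_iff_lt_mul hL).mpr he'
    have hr : e' % L < L := Nat.mod_lt _ hL
    have h0 := hxiM0 (e' / L) htlt
    rw [hxiM] at h0
    funext c
    have h1 := congrFun h0 (⟨L - 1 - e' % L, by omega⟩, c)
    simp only [Pi.zero_apply] at h1
    have hmat : ∀ i : Fin nx,
        (((A ^ L) ^ (e' / L)) * R) i ((⟨L - 1 - e' % L, by omega⟩ : Fin L), c)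
          = (A ^ e' * B) i c := by
      intro i
      rw [Matrix.mul_apply]
      have hRq : ∀ m : Fin nx, R m ((⟨L - 1 - e' % L, by omega⟩ : Fin L), c)
          = (A ^ (e' % L) * B) m c := by
        intro m
        show (A ^ (L - 1 - ((⟨L - 1 - e' % L, by omega⟩ : Fin L) : ℕ)) * B) m c = _
        rw [show L - 1 - ((⟨L - 1 - e' % L, by omega⟩ : Fin L) : ℕ) = e' % L by
          simp only []
          omega]
      simp only [hRq]
      rw [← Matrix.mul_apply, ← pow_mul, ← Matrix.mul_assoc, ← pow_add,
        show L * (e' / L) + e' % L = e' from Nat.div_add_mod e' L]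
    show ∑ i, ξ i * (A ^ e' * B) i c = 0
    rw [← Finset.sum_congr rfl fun i _ => congrArg (ξ i * ·) (hmat i)]
    exact h1
  have hxB : ξ ᵥ* ctrbMat A B = 0 := by
    funext pq
    obtain ⟨e, c⟩ := pq
    have he : (e : ℕ) < nx * L := lt_of_lt_of_le e.isLt (Nat.le_mul_of_pos_right nx hL)
    have := congrFun (hAB (e : ℕ) he) c
    exact this
  have hxi0 : ξ = 0 := aux_left_inj (ctrbMat A B)
    (by rw [hctrb, Fintype.card_fin]) ξ hxB
  funext r
  cases r with
  | inl i => exact congrFun hxi0 i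
  | inr q => exact hnu0 q






/-- Data-driven simulation with Page matrices: if the data input is `L`-Page exciting of order
`n_x + 1` and the system is controllable and observable with lag `l ≤ L_0`, then (i) a preimage
`g` of `(u_ini, y_ini, u_s)` under `[U_p; Y_p; U_f]` exists, and (ii) for every such `g`, the
unique simulated output satisfies `y_s = Y_f g`. -/
theorem dd_sim_page
    {nx nu ny : ℕ} (hnu : 1 ≤ nu)
    (A : Matrix (Fin nx) (Fin nx) ℝ) (B : Matrix (Fin nx) (Fin nu) ℝ)
    (C : Matrix (Fin ny) (Fin nx) ℝ) (D : Matrix (Fin ny) (Fin nu) ℝ)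
    -- minimality: controllability and observability
    (hctrb : (ctrbMat A B).rank = nx)
    (hobs : (obsMat A C nx).rank = nx)
    -- `l` is the lag of the system
    (l : ℕ) (hlagrank : (obsMat A C l).rank = nx)
    (hlagmin : ∀ i < l, (obsMat A C i).rank ≠ nx)
    (N L0 Ls : ℕ) (hL0 : l ≤ L0) (hLN : L0 + Ls ≤ N)
    -- the data trajectory
    (ud : ℕ → Fin nu → ℝ) (yd : ℕ → Fin ny → ℝ)
    (hdata : IsTraj A B C D N ud yd)
    -- the initial trajectory
    (uini : ℕ → Fin nu → ℝ) (yini : ℕ → Fin ny → ℝ)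
    (hini : IsTraj A B C D L0 uini yini)
    -- the simulated input
    (us : ℕ → Fin nu → ℝ)
    -- `u_d` is `L`-Page exciting of order `n_x + 1`
    (hPE : (pageStack ud (L0 + Ls) N (nx + 1)).rank = (nx + 1) * ((L0 + Ls) * nu)) :
    (∃ g : Fin (N / (L0 + Ls)) → ℝ,
      (pageBlock ud 0 L0 (L0 + Ls) (N / (L0 + Ls))).mulVec g = (fun p => uini p.1 p.2) ∧
      (pageBlock yd 0 L0 (L0 + Ls) (N / (L0 + Ls))).mulVec g = (fun p => yini p.1 p.2) ∧
      (pageBlock ud L0 Ls (L0 + Ls) (N / (L0 + Ls))).mulVec g = (fun p => us p.1 p.2)) ∧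
    (∀ g : Fin (N / (L0 + Ls)) → ℝ,
      (pageBlock ud 0 L0 (L0 + Ls) (N / (L0 + Ls))).mulVec g = (fun p => uini p.1 p.2) →
      (pageBlock yd 0 L0 (L0 + Ls) (N / (L0 + Ls))).mulVec g = (fun p => yini p.1 p.2) →
      (pageBlock ud L0 Ls (L0 + Ls) (N / (L0 + Ls))).mulVec g = (fun p => us p.1 p.2) →
      ∀ ys : ℕ → Fin ny → ℝ,
        IsTraj A B C D (L0 + Ls)
          (fun t => if t < L0 then uini t else us (t - L0))
          (fun t => if t < L0 then yini t else ys (t - L0)) →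
        (fun p : Fin Ls × Fin ny => ys p.1 p.2) =
          (pageBlock yd L0 Ls (L0 + Ls) (N / (L0 + Ls))).mulVec g) := by
  by_cases hLzero : L0 + Ls = 0
  · have hL00 : L0 = 0 := by omega
    have hLs0 : Ls = 0 := by omega
    refine ⟨⟨0, ?_, ?_, ?_⟩, ?_⟩
    · funext pc; exact absurd pc.1.isLt (by omega)
    · funext pc; exact absurd pc.1.isLt (by omega)
    · funext pc; exact absurd pc.1.isLt (by omega)
    · intro g _ _ _ ys _; funext pc; exact absurd pc.1.isLt (by omega)
  have hLpos : 0 < L0 + Ls := Nat.pos_of_ne_zero hLzero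
  set L := L0 + Ls with hLdef
  obtain ⟨xd, hxd⟩ := hdata
  obtain ⟨xini, hxini⟩ := hini
  have hKL : (N / L) * L ≤ N := Nat.div_mul_le_self N L
  -- observability injectivity
  have obs_inj : ∀ z : Fin nx → ℝ, (∀ t < L0, (C * A ^ t).mulVec z = 0) → z = 0 := by
    intro z hz
    refine aux_inj (obsMat A C l) (by rw [hlagrank, Fintype.card_fin]) z ?_
    funext pc
    exact congrFun (hz (pc.1 : ℕ) (by have := pc.1.isLt; omega)) pc.2
  have key_lin : ∀ (g : Fin (N / L) → ℝ) (t : ℕ), t < L →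
      (fun c => ∑ j : Fin (N / L), yd ((j : ℕ) * L + t) c * g j) =
      simOut A B C D (fun i => ∑ j : Fin (N / L), xd ((j : ℕ) * L) i * g j)
        (fun m c => ∑ j : Fin (N / L), ud ((j : ℕ) * L + m) c * g j) t :=
    fun g t ht => aux_key_lin A B C D ud yd xd L N hxd hKL g t ht
  -- existence
  set M0 : Matrix (Fin nx ⊕ (Fin L × Fin nu)) (Fin (N / L)) ℝ :=
    Sum.elim (fun i (j : Fin (N / L)) => xd ((j : ℕ) * L) i)
      (fun (q : Fin L × Fin nu) (j : Fin (N / L)) => ud ((j : ℕ) * L + (q.1 : ℕ)) q.2)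
    with hM0
  have hrank : M0.rank = Fintype.card (Fin nx ⊕ (Fin L × Fin nu)) := by
    apply aux_rank_rows
    intro w hw0
    refine aux_fund A B hctrb ud xd L N hLpos (fun t ht => (hxd t ht).1) hPE w ?_
    intro j
    have h6 := congrFun hw0 j
    rw [hM0] at h6
    simp only [Matrix.vecMul, dotProduct, Fintype.sum_sum_type, Pi.zero_apply,
      Sum.elim_inl, Sum.elim_inr] at h6
    simpa [dotProduct] using h6
  obtain ⟨g, hg⟩ := aux_surj M0 hrank (Sum.elim (xini 0)
    (fun q : Fin L × Fin nu => if (q.1 : ℕ) < L0 then uini (q.1 : ℕ) q.2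
      else us ((q.1 : ℕ) - L0) q.2))
  have hgx : (fun i => ∑ j : Fin (N / L), xd ((j : ℕ) * L) i * g j) = xini 0 := by
    funext i
    exact congrFun hg (Sum.inl i)
  have hgu : ∀ (m : ℕ), m < L → ∀ c, (∑ j : Fin (N / L), ud ((j : ℕ) * L + m) c * g j)
      = if m < L0 then uini m c else us (m - L0) c := by
    intro m hm c
    exact congrFun hg (Sum.inr (⟨m, hm⟩, c))
  refine ⟨⟨g, ?_, ?_, ?_⟩, ?_⟩
  · funext pc
    show (∑ j : Fin (N / L), ud ((j : ℕ) * L + 0 + (pc.1 : ℕ)) pc.2 * g j) = uini pc.1 pc.2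
    simp only [add_zero]
    rw [hgu (pc.1 : ℕ) (by have := pc.1.isLt; omega) pc.2, if_pos pc.1.isLt]
  · funext pc
    show (∑ j : Fin (N / L), yd ((j : ℕ) * L + 0 + (pc.1 : ℕ)) pc.2 * g j) = yini pc.1 pc.2
    simp only [add_zero]
    have hkl := congrFun (key_lin g (pc.1 : ℕ) (by have := pc.1.isLt; omega)) pc.2
    rw [hkl]
    have hco : simOut A B C D (fun i => ∑ j : Fin (N / L), xd ((j : ℕ) * L) i * g j)
        (fun m c => ∑ j : Fin (N / L), ud ((j : ℕ) * L + m) c * g j) (pc.1 : ℕ)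
        = simOut A B C D (xini 0) uini (pc.1 : ℕ) := by
      refine simOut_congr hgx fun m hm => funext fun c => ?_
      rw [hgu m (by have := pc.1.isLt; omega) c, if_pos (by have := pc.1.isLt; omega)]
    rw [hco]
    have ho := aux_out hxini 0 (pc.1 : ℕ) (by simpa using pc.1.isLt)
    simp only [zero_add] at ho
    exact (congrFun ho pc.2).symm
  · funext pc
    show (∑ j : Fin (N / L), ud ((j : ℕ) * L + L0 + (pc.1 : ℕ)) pc.2 * g j) = us pc.1 pc.2
    simp only [show ∀ jj : ℕ, jj * L + L0 + (pc.1 : ℕ) = jj * L + (L0 + (pc.1 : ℕ))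
      from fun jj => by omega]
    rw [hgu (L0 + (pc.1 : ℕ)) (by have := pc.1.isLt; omega) pc.2,
      if_neg (by omega), show L0 + (pc.1 : ℕ) - L0 = (pc.1 : ℕ) by omega]
  -- uniqueness
  clear hg hgx hgu
  intro g hUp' hYp' hUf' ys hys
  obtain ⟨xt, hxt⟩ := hys
  have hgu' : ∀ m, m < L → ∀ c, (∑ j : Fin (N / L), ud ((j : ℕ) * L + m) c * g j)
      = if m < L0 then uini m c else us (m - L0) c := by
    intro m hm c
    by_cases hmL0 : m < L0
    · have h7 : (∑ j : Fin (N / L), ud ((j : ℕ) * L + 0 + m) c * g j) = uini m c := by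
        exact congrFun hUp' (⟨m, hmL0⟩, c)
      simp only [add_zero] at h7
      rw [if_pos hmL0]
      exact h7
    · have h7 : (∑ j : Fin (N / L), ud ((j : ℕ) * L + L0 + (m - L0)) c * g j)
          = us (m - L0) c := by
        exact congrFun hUf' (⟨m - L0, by omega⟩, c)
      simp only [show ∀ jj : ℕ, jj * L + L0 + (m - L0) = jj * L + m
        from fun jj => by omega] at h7
      rw [if_neg hmL0]
      exact h7
  have hgy' : ∀ t, t < L0 → ∀ c, (∑ j : Fin (N / L), yd ((j : ℕ) * L + t) c * g j)
      = yini t c := by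
    intro t ht c
    have h7 : (∑ j : Fin (N / L), yd ((j : ℕ) * L + 0 + t) c * g j) = yini t c := by
      exact congrFun hYp' (⟨t, ht⟩, c)
    simpa only [add_zero] using h7
  have hyc : ∀ t, t < L → (if t < L0 then yini t else ys (t - L0))
      = simOut A B C D (xt 0) (fun t => if t < L0 then uini t else us (t - L0)) t := by
    intro t ht
    have h8 := aux_out hxt 0 t (by omega)
    simpa using h8
  have hxg : (fun i => ∑ j : Fin (N / L), xd ((j : ℕ) * L) i * g j) = xt 0 := by
    rw [← sub_eq_zero]
    apply obs_inj
    intro t ht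
    rw [Matrix.mulVec_sub, sub_eq_zero]
    have h1 := key_lin g t (by omega)
    have h3 : simOut A B C D (fun i => ∑ j : Fin (N / L), xd ((j : ℕ) * L) i * g j)
        (fun m c => ∑ j : Fin (N / L), ud ((j : ℕ) * L + m) c * g j) t = yini t := by
      funext c
      rw [← congrFun h1 c, hgy' t ht c]
    have h4 : simOut A B C D (fun i => ∑ j : Fin (N / L), xd ((j : ℕ) * L) i * g j)
        (fun t => if t < L0 then uini t else us (t - L0)) t
        = simOut A B C D (xt 0) (fun t => if t < L0 then uini t else us (t - L0)) t := by
      have h5 : simOut A B C D (fun i => ∑ j : Fin (N / L), xd ((j : ℕ) * L) i * g j)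
          (fun t => if t < L0 then uini t else us (t - L0)) t
          = simOut A B C D (fun i => ∑ j : Fin (N / L), xd ((j : ℕ) * L) i * g j)
            (fun m c => ∑ j : Fin (N / L), ud ((j : ℕ) * L + m) c * g j) t := by
        refine simOut_congr rfl fun m hm => funext fun c => ?_
        rw [hgu' m (by omega) c, ite_apply]
      rw [h5, h3]
      have h9 := hyc t (by omega)
      rw [if_pos ht] at h9
      exact h9
    unfold simOut at h4
    exact add_right_cancel (add_right_cancel h4)
  funext pc
  show ys pc.1 pc.2 = ∑ j : Fin (N / L), yd ((j : ℕ) * L + L0 + (pc.1 : ℕ)) pc.2 * g j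
  simp only [show ∀ jj : ℕ, jj * L + L0 + (pc.1 : ℕ) = jj * L + (L0 + (pc.1 : ℕ))
    from fun jj => by omega]
  have htL : L0 + (pc.1 : ℕ) < L := by have := pc.1.isLt; omega
  rw [congrFun (key_lin g (L0 + (pc.1 : ℕ)) htL) pc.2]
  have h4 : simOut A B C D (fun i => ∑ j : Fin (N / L), xd ((j : ℕ) * L) i * g j)
      (fun m c => ∑ j : Fin (N / L), ud ((j : ℕ) * L + m) c * g j) (L0 + (pc.1 : ℕ))
      = simOut A B C D (xt 0) (fun t => if t < L0 then uini t else us (t - L0))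
        (L0 + (pc.1 : ℕ)) := by
    refine simOut_congr hxg fun m hm => funext fun c => ?_
    rw [hgu' m (by omega) c, ite_apply]
  rw [h4, ← hyc (L0 + (pc.1 : ℕ)) htL, if_neg (by omega),
    show L0 + (pc.1 : ℕ) - L0 = (pc.1 : ℕ) by omega]


end DDSim
end

section
/- Let (A,B,C,D) be an LTI system with state dimension n_x and lag l. Let (u_d, y_d) be a trajectory of the system of length N with associated state sequence x_d, let (u_ini, y_ini) be a trajectory of the system of length L_0 with L_0 ≥ l and with (unique) initial state x̂ ∈ ℝ^{n_x}, let u_s be an input sequence of length L_s, and set L = L_0 + L_s. Partition the block Hankel matrices 𝓗_L(u_d) = [U_p; U_f] and 𝓗_L(y_d) = [Y_p; Y_f] into the first L_0 and last L_s block rows, and let X_p = [x_{d,0}, x_{d,1}, …, x_{d,N−L}]. Assume the stacked vector [u_ini; u_s; x̂] lies in the column space (image) of the stacked matrix [U_p; U_f; X_p]. Then: (i) there exists a vector g ∈ ℝ^{N−L+1} such that U_p g = u_ini, Y_p g = y_ini, and U_f g = u_s; and (ii) for every such g and for every output sequence y_s of length L_s such that the concatenated sequences (u_ini followed by u_s,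 y_ini followed by y_s) form a trajectory of the system, one has y_s = Y_f g (stacked as a vector). -/
open Matrix

open Finset Module

namespace DDSim

lemma eq_zero_of_mulVec_eq_zero {m : Type*} [Fintype m] {nx : ℕ} {M : Matrix m (Fin nx) ℝ} (h : M.rank = nx)
    {v : Fin nx → ℝ} (hv : M.mulVec v = 0) : v = 0 := by
  have h1 : finrank ℝ (LinearMap.range M.mulVecLin) + finrank ℝ (LinearMap.ker M.mulVecLin)
      = finrank ℝ (Fin nx → ℝ) := LinearMap.finrank_range_add_finrank_ker _
  rw [Module.finrank_fin_fun] at h1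
  have hr : M.rank = finrank ℝ (LinearMap.range M.mulVecLin) := rfl
  have hker : finrank ℝ (LinearMap.ker M.mulVecLin) = 0 := by omega
  have : LinearMap.ker M.mulVecLin = ⊥ := Submodule.finrank_eq_zero.mp hker
  have hvmem : v ∈ LinearMap.ker M.mulVecLin := by
    simp [LinearMap.mem_ker, Matrix.mulVecLin_apply, hv]
  rw [this] at hvmem
  simpa using hvmem

lemma mulVec_fun_sum {m n c : ℕ} (M : Matrix (Fin m) (Fin n) ℝ)
    (g : Fin c → ℝ) (v : Fin c → Fin n → ℝ) :
    M.mulVec (fun i => ∑ j, g j * v j i) = fun k => ∑ j, g j * M.mulVec (v j) k := by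
  funext k
  simp only [mulVec, dotProduct, Finset.mul_sum]
  rw [Finset.sum_comm]
  refine Finset.sum_congr rfl fun j _ => ?_
  exact Finset.sum_congr rfl fun i _ => by ring

lemma traj_diff {nx nu ny : ℕ} {A : Matrix (Fin nx) (Fin nx) ℝ} {B : Matrix (Fin nx) (Fin nu) ℝ}
    {C : Matrix (Fin ny) (Fin nx) ℝ} {D : Matrix (Fin ny) (Fin nu) ℝ}
    {T : ℕ} {u u' : ℕ → Fin nu → ℝ} {y y' : ℕ → Fin ny → ℝ}
    {x x' : ℕ → Fin nx → ℝ}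
    (hx : IsStateTraj A B C D T u y x) (hx' : IsStateTraj A B C D T u' y' x')
    (hu : ∀ t < T, u t = u' t) :
    (∀ t ≤ T, x t - x' t = (A ^ t).mulVec (x 0 - x' 0)) ∧
    (∀ t < T, y t - y' t = (C * A ^ t).mulVec (x 0 - x' 0)) := by
  have hst : ∀ t ≤ T, x t - x' t = (A ^ t).mulVec (x 0 - x' 0) := by
    intro t
    induction t with
    | zero => intro _; simp
    | succ t ih =>
      intro h
      have ht : t < T := h
      rw [(hx t ht).1, (hx' t ht).1, hu t ht]
      have e1 : A.mulVec (x t) + B.mulVec (u' t) - (A.mulVec (x' t) + B.mulVec (u' t))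
          = A.mulVec (x t - x' t) := by rw [Matrix.mulVec_sub]; abel
      rw [e1, ih (le_of_lt ht), Matrix.mulVec_mulVec, ← pow_succ']
  refine ⟨hst, fun t ht => ?_⟩
  rw [(hx t ht).2, (hx' t ht).2, hu t ht]
  have e1 : C.mulVec (x t) + D.mulVec (u' t) - (C.mulVec (x' t) + D.mulVec (u' t))
      = C.mulVec (x t - x' t) := by rw [Matrix.mulVec_sub]; abel
  rw [e1, hst t (le_of_lt ht), Matrix.mulVec_mulVec]

/-- identification of initial state and then of all outputs -/
lemma outputs_eq {nx nu ny : ℕ} {A : Matrix (Fin nx) (Fin nx) ℝ} {B : Matrix (Fin nx) (Fin nu) ℝ}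
    {C : Matrix (Fin ny) (Fin nx) ℝ} {D : Matrix (Fin ny) (Fin nu) ℝ}
    {l T : ℕ} (hl : (obsMat A C l).rank = nx) (hlT : l ≤ T)
    {u u' : ℕ → Fin nu → ℝ} {y y' : ℕ → Fin ny → ℝ} {x x' : ℕ → Fin nx → ℝ}
    (hx : IsStateTraj A B C D T u y x) (hx' : IsStateTraj A B C D T u' y' x')
    (hu : ∀ t < T, u t = u' t) (hy : ∀ t < l, y t = y' t) :
    ∀ t < T, y t = y' t := by
  obtain ⟨hs, hyd⟩ := traj_diff hx hx' hu
  have hker : (obsMat A C l).mulVec (x 0 - x' 0) = 0 := by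
    funext p
    have hp : (p.1 : ℕ) < T := lt_of_lt_of_le p.1.2 hlT
    have := hyd p.1 hp
    have h0 : y (p.1 : ℕ) - y' (p.1 : ℕ) = 0 := by rw [hy _ p.1.2]; simp
    rw [h0] at this
    have := congrFun this.symm p.2
    simpa [obsMat, mulVec, dotProduct] using this
  have hd : x 0 - x' 0 = 0 := eq_zero_of_mulVec_eq_zero hl hker
  intro t ht
  have := hyd t ht
  rw [hd] at this
  simp only [Matrix.mulVec_zero] at this
  have : y t - y' t = 0 := this
  funext k
  have := congrFun this k
  simp only [Pi.sub_apply, Pi.zero_apply] at this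
  linarith

lemma outputs_eq_of_init {nx nu ny : ℕ} {A : Matrix (Fin nx) (Fin nx) ℝ}
    {B : Matrix (Fin nx) (Fin nu) ℝ} {C : Matrix (Fin ny) (Fin nx) ℝ}
    {D : Matrix (Fin ny) (Fin nu) ℝ}
    {T : ℕ} {u u' : ℕ → Fin nu → ℝ} {y y' : ℕ → Fin ny → ℝ} {x x' : ℕ → Fin nx → ℝ}
    (hx : IsStateTraj A B C D T u y x) (hx' : IsStateTraj A B C D T u' y' x')
    (hu : ∀ t < T, u t = u' t) (h0 : x 0 = x' 0) :
    ∀ t < T, y t = y' t := by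
  obtain ⟨_, hyd⟩ := traj_diff hx hx' hu
  intro t ht
  have h1 := hyd t ht
  rw [h0, sub_self, Matrix.mulVec_zero] at h1
  exact sub_eq_zero.mp h1

lemma star_traj {nx nu ny : ℕ} {A : Matrix (Fin nx) (Fin nx) ℝ} {B : Matrix (Fin nx) (Fin nu) ℝ}
    {C : Matrix (Fin ny) (Fin nx) ℝ} {D : Matrix (Fin ny) (Fin nu) ℝ}
    {Nn L : ℕ} (hLN : L ≤ Nn)
    {ud : ℕ → Fin nu → ℝ} {yd : ℕ → Fin ny → ℝ} {xd : ℕ → Fin nx → ℝ}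
    (hdata : IsStateTraj A B C D Nn ud yd xd)
    (g : Fin (Nn - L + 1) → ℝ) :
    IsStateTraj A B C D L
      (fun t k => ∑ j, g j * ud (t + (j : ℕ)) k)
      (fun t k => ∑ j, g j * yd (t + (j : ℕ)) k)
      (fun t k => ∑ j, g j * xd (t + (j : ℕ)) k) := by
  intro t ht
  have hb : ∀ j : Fin (Nn - L + 1), t + (j : ℕ) < Nn := fun j => by
    have := j.2; omega
  constructor
  · rw [mulVec_fun_sum, mulVec_fun_sum]
    funext k
    simp only [Pi.add_apply]
    rw [← Finset.sum_add_distrib]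
    refine Finset.sum_congr rfl fun j _ => ?_
    have h2 := congrFun (hdata (t + (j : ℕ)) (hb j)).1 k
    have he : t + 1 + (j : ℕ) = t + (j : ℕ) + 1 := by omega
    rw [he, h2]
    simp only [Pi.add_apply]; ring
  · rw [mulVec_fun_sum, mulVec_fun_sum]
    funext k
    simp only [Pi.add_apply]
    rw [← Finset.sum_add_distrib]
    refine Finset.sum_congr rfl fun j _ => ?_
    have h2 := congrFun (hdata (t + (j : ℕ)) (hb j)).2 k
    rw [h2]
    simp only [Pi.add_apply]; ring

/-- Data-driven simulation with Hankel matrices under relaxed excitation conditions: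
if `[u_ini; u_s; x̂]` lies in the image of `[U_p; U_f; X_p]`, then (i) a preimage `g` of
`(u_ini, y_ini, u_s)` under `[U_p; Y_p; U_f]` exists, and (ii) for every such `g` the
unique simulated output satisfies `y_s = Y_f g`. -/
theorem dd_sim_hankel_relaxed
    {nx nu ny : ℕ}
    (A : Matrix (Fin nx) (Fin nx) ℝ) (B : Matrix (Fin nx) (Fin nu) ℝ)
    (C : Matrix (Fin ny) (Fin nx) ℝ) (D : Matrix (Fin ny) (Fin nu) ℝ)
    -- `l` is the lag of the system
    (l : ℕ) (hlagrank : (obsMat A C l).rank = nx)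
    (hlagmin : ∀ i < l, (obsMat A C i).rank ≠ nx)
    (N L0 Ls : ℕ) (hL0 : l ≤ L0) (hLN : L0 + Ls ≤ N)
    -- the data trajectory, with associated state sequence `xd`
    (ud : ℕ → Fin nu → ℝ) (yd : ℕ → Fin ny → ℝ) (xd : ℕ → Fin nx → ℝ)
    (hdata : IsStateTraj A B C D N ud yd xd)
    -- the initial trajectory, with (unique) initial state `xini 0`
    (uini : ℕ → Fin nu → ℝ) (yini : ℕ → Fin ny → ℝ) (xini : ℕ → Fin nx → ℝ)
    (hini : IsStateTraj A B C D L0 uini yini xini)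
    -- the simulated input
    (us : ℕ → Fin nu → ℝ)
    -- the range condition: `[u_ini; u_s; x̂] ∈ Im [U_p; U_f; X_p]`
    (hrange : ∃ h : Fin (N - (L0 + Ls) + 1) → ℝ,
      (blockRows ud 0 L0 (N - (L0 + Ls) + 1)).mulVec h = (fun p => uini p.1 p.2) ∧
      (blockRows ud L0 Ls (N - (L0 + Ls) + 1)).mulVec h = (fun p => us p.1 p.2) ∧
      (Matrix.of fun (k : Fin nx) (j : Fin (N - (L0 + Ls) + 1)) => xd (j : ℕ) k).mulVec h
        = xini 0) :
    (∃ g : Fin (N - (L0 + Ls) + 1) → ℝ,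
      (blockRows ud 0 L0 (N - (L0 + Ls) + 1)).mulVec g = (fun p => uini p.1 p.2) ∧
      (blockRows yd 0 L0 (N - (L0 + Ls) + 1)).mulVec g = (fun p => yini p.1 p.2) ∧
      (blockRows ud L0 Ls (N - (L0 + Ls) + 1)).mulVec g = (fun p => us p.1 p.2)) ∧
    (∀ g : Fin (N - (L0 + Ls) + 1) → ℝ,
      (blockRows ud 0 L0 (N - (L0 + Ls) + 1)).mulVec g = (fun p => uini p.1 p.2) →
      (blockRows yd 0 L0 (N - (L0 + Ls) + 1)).mulVec g = (fun p => yini p.1 p.2) →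
      (blockRows ud L0 Ls (N - (L0 + Ls) + 1)).mulVec g = (fun p => us p.1 p.2) →
      ∀ ys : ℕ → Fin ny → ℝ,
        IsTraj A B C D (L0 + Ls)
          (fun t => if t < L0 then uini t else us (t - L0))
          (fun t => if t < L0 then yini t else ys (t - L0)) →
        (fun p : Fin Ls × Fin ny => ys p.1 p.2) =
          (blockRows yd L0 Ls (N - (L0 + Ls) + 1)).mulVec g) := by
  classical
  set cols := N - (L0 + Ls) + 1 with hcols
  have hbr : ∀ {nz rows off : ℕ} (z : ℕ → Fin nz → ℝ) (g : Fin cols → ℝ)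
      (p : Fin rows × Fin nz),
      (blockRows z off rows cols).mulVec g p
        = ∑ j, g j * z (off + (p.1 : ℕ) + (j : ℕ)) p.2 := by
    intro nz rows off z g p
    simp only [blockRows, mulVec, dotProduct]
    exact Finset.sum_congr rfl fun j _ => mul_comm _ _
  have hstar : ∀ g : Fin cols → ℝ, IsStateTraj A B C D (L0 + Ls)
      (fun t k => ∑ j, g j * ud (t + (j : ℕ)) k)
      (fun t k => ∑ j, g j * yd (t + (j : ℕ)) k)
      (fun t k => ∑ j, g j * xd (t + (j : ℕ)) k) := fun g => star_traj hLN hdata g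
  constructor
  · -- existence of g
    obtain ⟨h, hup, huf, hx0⟩ := hrange
    refine ⟨h, hup, ?_, huf⟩
    have hS := hstar h
    have hSL0 : IsStateTraj A B C D L0
        (fun t k => ∑ j, h j * ud (t + (j : ℕ)) k)
        (fun t k => ∑ j, h j * yd (t + (j : ℕ)) k)
        (fun t k => ∑ j, h j * xd (t + (j : ℕ)) k) :=
      fun t ht => hS t (by omega)
    have hu : ∀ t < L0, (fun k => ∑ j, h j * ud (t + (j : ℕ)) k) = uini t := by
      intro t ht
      funext k
      have h1 := congrFun hup (⟨t, ht⟩, k)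
      rw [hbr] at h1
      simpa using h1
    have hx0' : (fun k => ∑ j, h j * xd (0 + (j : ℕ)) k) = xini 0 := by
      funext k
      have h1 := congrFun hx0 k
      simp only [mulVec, dotProduct, Matrix.of_apply] at h1
      rw [← h1]
      exact Finset.sum_congr rfl fun j _ => by rw [Nat.zero_add]; ring
    have hyy := outputs_eq_of_init hSL0 hini hu hx0'
    funext p
    rw [hbr]
    have h1 := congrFun (hyy p.1 p.1.2) p.2
    simpa using h1
  · -- uniqueness of the simulated output
    intro g hgu hgy hgf ys hys
    obtain ⟨xc, hxc⟩ := hys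
    have hSg := hstar g
    have hu : ∀ t < L0 + Ls, (fun k => ∑ j, g j * ud (t + (j : ℕ)) k)
        = (if t < L0 then uini t else us (t - L0)) := by
      intro t ht
      by_cases h' : t < L0
      · rw [if_pos h']
        funext k
        have h1 := congrFun hgu (⟨t, h'⟩, k)
        rw [hbr] at h1
        simpa using h1
      · rw [if_neg h']
        funext k
        have hs' : t - L0 < Ls := by omega
        have h1 := congrFun hgf (⟨t - L0, hs'⟩, k)
        rw [hbr] at h1
        have he : L0 + (t - L0) = t := by omega
        simpa [he] using h1
    have hyl : ∀ t < l, (fun k => ∑ j, g j * yd (t + (j : ℕ)) k)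
        = (if t < L0 then yini t else ys (t - L0)) := by
      intro t ht
      have h' : t < L0 := lt_of_lt_of_le ht hL0
      rw [if_pos h']
      funext k
      have h1 := congrFun hgy (⟨t, h'⟩, k)
      rw [hbr] at h1
      simpa using h1
    have hout := outputs_eq hlagrank (show l ≤ L0 + Ls by omega) hSg hxc hu hyl
    funext p
    rw [hbr]
    have hLp : L0 + (p.1 : ℕ) < L0 + Ls := by have := p.1.2; omega
    have h1 := congrFun (hout (L0 + (p.1 : ℕ)) hLp) p.2
    have hnlt : ¬ (L0 + (p.1 : ℕ) < L0) := by omega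
    simp only [if_neg hnlt, Nat.add_sub_cancel_left] at h1
    exact h1.symm

end DDSim
end

section
/- Let (A,B,C,D) be an LTI system with state dimension n_x and lag l. Let (u_d, y_d) be a trajectory of the system of length N with associated state sequence x_d, let (u_ini, y_ini) be a trajectory of the system of length L_0 with L_0 ≥ l and with (unique) initial state x̂ ∈ ℝ^{n_x}, let u_s be an input sequence of length L_s, and set L = L_0 + L_s. Partition the block Page matrices 𝓟_L(u_d) = [U_p; U_f] and 𝓟_L(y_d) = [Y_p; Y_f] into the first L_0 and last L_s block rows, and let X_p = [x_{d,0}, x_{d,L}, …, x_{d,(⌊N/L⌋−1)L}]. Assume the stacked vector [u_ini; u_s; x̂] lies in the column space (image) of the stacked matrix [U_p; U_f; X_p]. Then: (i) there exists a vector g ∈ ℝ^{⌊N/L⌋} such that U_p g = u_ini, Y_p g = y_ini, and U_f g = u_s; and (ii) for every such g and for every output sequence y_s of length L_s such that the concatenated sequences (u_ini followed by u_s, y_ini followed by y_s) form a trajectory of the system, one has y_s = Y_f g (stacked as a vector). -/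
open Matrix

namespace DDSim

def bar {nz cols : ℕ} (z : ℕ → Fin nz → ℝ) (L : ℕ) (g : Fin cols → ℝ) (t : ℕ) : Fin nz → ℝ :=
  ∑ j : Fin cols, g j • z ((j : ℕ) * L + t)

lemma mulVec_inj_of_rank {m : Type*} [Fintype m] {n : ℕ} (M : Matrix m (Fin n) ℝ)
    (h : M.rank = n) :
    Function.Injective M.mulVec := by
  have hker : LinearMap.ker M.mulVecLin = ⊥ := by
    have h2 := LinearMap.finrank_range_add_finrank_ker M.mulVecLin
    rw [Module.finrank_fintype_fun_eq_card, Fintype.card_fin] at h2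
    unfold Matrix.rank at h
    have h3 : Module.finrank ℝ (LinearMap.ker M.mulVecLin) = 0 := by omega
    exact Submodule.finrank_eq_zero.mp h3
  intro x y hxy
  exact LinearMap.ker_eq_bot.mp hker hxy

lemma mulVec_sum_smul' {m n cols : ℕ} (M : Matrix (Fin m) (Fin n) ℝ) (g : Fin cols → ℝ)
    (v : Fin cols → Fin n → ℝ) :
    M.mulVec (∑ j, g j • v j) = ∑ j, g j • M.mulVec (v j) := by
  rw [← Matrix.mulVecLin_apply, map_sum]
  simp [Matrix.mulVecLin_apply, _root_.map_smul]

lemma pageBlock_mulVec {nz : ℕ} (z : ℕ → Fin nz → ℝ) (off rows L cols : ℕ)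
    (g : Fin cols → ℝ) (p : Fin rows × Fin nz) :
    (pageBlock z off rows L cols).mulVec g p = bar z L g (off + (p.1 : ℕ)) p.2 := by
  simp [pageBlock, bar, Matrix.mulVec, dotProduct, Finset.sum_apply, mul_comm,
    add_assoc]

lemma bar_traj {nx nu ny : ℕ} (A : Matrix (Fin nx) (Fin nx) ℝ) (B : Matrix (Fin nx) (Fin nu) ℝ)
    (C : Matrix (Fin ny) (Fin nx) ℝ) (D : Matrix (Fin ny) (Fin nu) ℝ)
    (N L : ℕ) (ud : ℕ → Fin nu → ℝ) (yd : ℕ → Fin ny → ℝ) (xd : ℕ → Fin nx → ℝ)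
    (hdata : IsStateTraj A B C D N ud yd xd) (g : Fin (N / L) → ℝ) :
    IsStateTraj A B C D L (bar ud L g) (bar yd L g) (bar xd L g) := by
  intro t ht
  have hb : ∀ j : Fin (N / L), (j : ℕ) * L + t < N := by
    intro j
    have h1 : ((j : ℕ) + 1) * L ≤ (N / L) * L :=
      Nat.mul_le_mul_right _ j.isLt
    have h3 : (N / L) * L ≤ N := Nat.div_mul_le_self N _
    have h4 : (j : ℕ) * L + t < ((j : ℕ) + 1) * L := by
      rw [add_mul, one_mul]; omega
    omega
  constructor
  · calc bar xd L g (t + 1)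
        = ∑ j : Fin (N / L), g j • (A.mulVec (xd ((j : ℕ) * L + t))
            + B.mulVec (ud ((j : ℕ) * L + t))) := by
          unfold bar
          exact Finset.sum_congr rfl fun j _ => congrArg _ (hdata _ (hb j)).1
      _ = A.mulVec (bar xd L g t) + B.mulVec (bar ud L g t) := by
          unfold bar
          rw [mulVec_sum_smul', mulVec_sum_smul', ← Finset.sum_add_distrib]
          exact Finset.sum_congr rfl fun j _ => smul_add _ _ _
  · calc bar yd L g t
        = ∑ j : Fin (N / L), g j • (C.mulVec (xd ((j : ℕ) * L + t))
            + D.mulVec (ud ((j : ℕ) * L + t))) := by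
          unfold bar
          exact Finset.sum_congr rfl fun j _ => congrArg _ (hdata _ (hb j)).2
      _ = C.mulVec (bar xd L g t) + D.mulVec (bar ud L g t) := by
          unfold bar
          rw [mulVec_sum_smul', mulVec_sum_smul', ← Finset.sum_add_distrib]
          exact Finset.sum_congr rfl fun j _ => smul_add _ _ _

/-- Data-driven simulation with Page matrices under relaxed excitation conditions:
if `[u_ini; u_s; x̂]` lies in the image of `[U_p; U_f; X_p]`, then (i) a preimage `g` of
`(u_ini, y_ini, u_s)` under `[U_p; Y_p; U_f]` exists, and (ii) for every such `g` the
unique simulated output satisfies `y_s = Y_f g`. -/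
theorem dd_sim_page_relaxed
    {nx nu ny : ℕ}
    (A : Matrix (Fin nx) (Fin nx) ℝ) (B : Matrix (Fin nx) (Fin nu) ℝ)
    (C : Matrix (Fin ny) (Fin nx) ℝ) (D : Matrix (Fin ny) (Fin nu) ℝ)
    -- `l` is the lag of the system
    (l : ℕ) (hlagrank : (obsMat A C l).rank = nx)
    (hlagmin : ∀ i < l, (obsMat A C i).rank ≠ nx)
    (N L0 Ls : ℕ) (hL0 : l ≤ L0) (hLN : L0 + Ls ≤ N)
    -- the data trajectory, with associated state sequence `xd`
    (ud : ℕ → Fin nu → ℝ) (yd : ℕ → Fin ny → ℝ) (xd : ℕ → Fin nx → ℝ)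
    (hdata : IsStateTraj A B C D N ud yd xd)
    -- the initial trajectory, with (unique) initial state `xini 0`
    (uini : ℕ → Fin nu → ℝ) (yini : ℕ → Fin ny → ℝ) (xini : ℕ → Fin nx → ℝ)
    (hini : IsStateTraj A B C D L0 uini yini xini)
    -- the simulated input
    (us : ℕ → Fin nu → ℝ)
    -- the range condition: `[u_ini; u_s; x̂] ∈ Im [U_p; U_f; X_p]`,
    -- where `X_p = [x_{d,0}, x_{d,L}, …, x_{d,(⌊N/L⌋-1)L}]`
    (hrange : ∃ h : Fin (N / (L0 + Ls)) → ℝ,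
      (pageBlock ud 0 L0 (L0 + Ls) (N / (L0 + Ls))).mulVec h = (fun p => uini p.1 p.2) ∧
      (pageBlock ud L0 Ls (L0 + Ls) (N / (L0 + Ls))).mulVec h = (fun p => us p.1 p.2) ∧
      (Matrix.of fun (k : Fin nx) (j : Fin (N / (L0 + Ls))) =>
          xd ((j : ℕ) * (L0 + Ls)) k).mulVec h = xini 0) :
    (∃ g : Fin (N / (L0 + Ls)) → ℝ,
      (pageBlock ud 0 L0 (L0 + Ls) (N / (L0 + Ls))).mulVec g = (fun p => uini p.1 p.2) ∧
      (pageBlock yd 0 L0 (L0 + Ls) (N / (L0 + Ls))).mulVec g = (fun p => yini p.1 p.2) ∧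
      (pageBlock ud L0 Ls (L0 + Ls) (N / (L0 + Ls))).mulVec g = (fun p => us p.1 p.2)) ∧
    (∀ g : Fin (N / (L0 + Ls)) → ℝ,
      (pageBlock ud 0 L0 (L0 + Ls) (N / (L0 + Ls))).mulVec g = (fun p => uini p.1 p.2) →
      (pageBlock yd 0 L0 (L0 + Ls) (N / (L0 + Ls))).mulVec g = (fun p => yini p.1 p.2) →
      (pageBlock ud L0 Ls (L0 + Ls) (N / (L0 + Ls))).mulVec g = (fun p => us p.1 p.2) →
      ∀ ys : ℕ → Fin ny → ℝ,
        IsTraj A B C D (L0 + Ls)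
          (fun t => if t < L0 then uini t else us (t - L0))
          (fun t => if t < L0 then yini t else ys (t - L0)) →
        (fun p : Fin Ls × Fin ny => ys p.1 p.2) =
          (pageBlock yd L0 Ls (L0 + Ls) (N / (L0 + Ls))).mulVec g) := by
  obtain ⟨h0, hh1, hh2, hh3⟩ := hrange
  -- extraction lemma: mulVec equalities give pointwise `bar` equalities
  have hext : ∀ {nz : ℕ} (z : ℕ → Fin nz → ℝ) (off rows : ℕ) (w : ℕ → Fin nz → ℝ)
      (g : Fin (N / (L0 + Ls)) → ℝ),
      (pageBlock z off rows (L0 + Ls) (N / (L0 + Ls))).mulVec g = (fun p => w p.1 p.2) →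
      ∀ t, ∀ _ : t < rows, bar z (L0 + Ls) g (off + t) = w t := by
    intro nz z off rows w g hg t ht
    funext i
    have := congrFun hg (⟨t, ht⟩, i)
    rw [pageBlock_mulVec] at this
    simpa using this
  have htraj : ∀ g : Fin (N / (L0 + Ls)) → ℝ,
      IsStateTraj A B C D (L0 + Ls) (bar ud (L0 + Ls) g) (bar yd (L0 + Ls) g)
        (bar xd (L0 + Ls) g) :=
    fun g => bar_traj A B C D N (L0 + Ls) ud yd xd hdata g
  -- state agreement lemma for part (i)
  have hx0 : bar xd (L0 + Ls) h0 0 = xini 0 := by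
    funext k
    have := congrFun hh3 k
    simp only [Matrix.mulVec, dotProduct, Matrix.of_apply] at this
    simp only [bar, Finset.sum_apply, Pi.smul_apply, smul_eq_mul, add_zero]
    rw [← this]
    exact Finset.sum_congr rfl fun j _ => mul_comm _ _
  have hu0 := hext ud 0 L0 uini h0 hh1
  have hxeq : ∀ t, t ≤ L0 → bar xd (L0 + Ls) h0 t = xini t := by
    intro t
    induction t with
    | zero => intro _; exact hx0
    | succ t ih =>
      intro ht
      have ht' : t < L0 := by omega
      have h1 := (htraj h0 t (by omega)).1
      have h2 := (hini t ht').1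
      have h3 := hu0 t ht'
      rw [zero_add] at h3
      rw [h1, h2, ih (by omega), h3]
  have hyp0 : (pageBlock yd 0 L0 (L0 + Ls) (N / (L0 + Ls))).mulVec h0
      = (fun p => yini p.1 p.2) := by
    funext p
    rw [pageBlock_mulVec]
    have h1 := (htraj h0 (p.1 : ℕ) (by omega)).2
    have h2 := (hini (p.1 : ℕ) p.1.isLt).2
    have h3 := hu0 (p.1 : ℕ) p.1.isLt
    rw [zero_add] at h3
    have : bar yd (L0 + Ls) h0 (p.1 : ℕ) = yini (p.1 : ℕ) := by
      rw [h1, h2, hxeq _ (le_of_lt p.1.isLt), h3]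
    simp [zero_add, this]
  refine ⟨⟨h0, hh1, hyp0, hh2⟩, ?_⟩
  -- part (ii)
  intro g hg1 hg2 hg3 ys hys
  obtain ⟨x', hx'⟩ := hys
  have hbu : ∀ t, ∀ _ : t < L0, bar ud (L0 + Ls) g t = uini t := by
    intro t ht; have := hext ud 0 L0 uini g hg1 t ht; rwa [zero_add] at this
  have hby : ∀ t, ∀ _ : t < L0, bar yd (L0 + Ls) g t = yini t := by
    intro t ht; have := hext yd 0 L0 yini g hg2 t ht; rwa [zero_add] at this
  have hbf : ∀ s, ∀ _ : s < Ls, bar ud (L0 + Ls) g (L0 + s) = us s :=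
    hext ud L0 Ls us g hg3
  -- difference of states on the initial window
  have hC : ∀ t, ∀ _ : t < L0, C.mulVec (x' t - bar xd (L0 + Ls) g t) = 0 := by
    intro t ht
    have h1 := (hx' t (by omega)).2
    have h2 := (htraj g t (by omega)).2
    simp only [if_pos ht] at h1
    rw [hbu t ht, hby t ht] at h2
    rw [Matrix.mulVec_sub]
    have h3 : C.mulVec (x' t) + D.mulVec (uini t)
        = C.mulVec (bar xd (L0 + Ls) g t) + D.mulVec (uini t) := h1.symm.trans h2
    have h4 := add_right_cancel h3
    rw [h4, sub_self]
  have hA : ∀ t, ∀ _ : t < L0,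
      x' (t + 1) - bar xd (L0 + Ls) g (t + 1)
        = A.mulVec (x' t - bar xd (L0 + Ls) g t) := by
    intro t ht
    have h1 := (hx' t (by omega)).1
    have h2 := (htraj g t (by omega)).1
    simp only [if_pos ht] at h1
    rw [hbu t ht] at h2
    rw [h1, h2, Matrix.mulVec_sub]
    abel
  have hpow : ∀ t, t ≤ L0 →
      x' t - bar xd (L0 + Ls) g t
        = (A ^ t).mulVec (x' 0 - bar xd (L0 + Ls) g 0) := by
    intro t
    induction t with
    | zero => intro _; simp [Matrix.one_mulVec]
    | succ t ih =>
      intro ht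
      rw [hA t (by omega), ih (by omega), Matrix.mulVec_mulVec, ← pow_succ']
  have hd0 : x' 0 - bar xd (L0 + Ls) g 0 = 0 := by
    have hinj := mulVec_inj_of_rank (obsMat A C l) (by rw [hlagrank])
    apply hinj
    rw [Matrix.mulVec_zero]
    funext p
    have hp : (p.1 : ℕ) < L0 := lt_of_lt_of_le p.1.isLt hL0
    have h1 := congrFun (hC (p.1 : ℕ) hp) p.2
    rw [hpow (p.1 : ℕ) (le_of_lt hp)] at h1
    rw [show (obsMat A C l).mulVec (x' 0 - bar xd (L0 + Ls) g 0) p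
        = (C * A ^ (p.1 : ℕ)).mulVec (x' 0 - bar xd (L0 + Ls) g 0) p.2 from rfl,
      ← Matrix.mulVec_mulVec]
    exact h1
  have hxL0 : x' L0 = bar xd (L0 + Ls) g L0 := by
    have := hpow L0 le_rfl
    rw [hd0, Matrix.mulVec_zero] at this
    exact sub_eq_zero.mp this
  have hxs : ∀ s, s ≤ Ls → x' (L0 + s) = bar xd (L0 + Ls) g (L0 + s) := by
    intro s
    induction s with
    | zero => intro _; simpa using hxL0
    | succ s ih =>
      intro hs
      have hs' : s < Ls := by omega
      have h1 := (hx' (L0 + s) (by omega)).1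
      have h2 := (htraj g (L0 + s) (by omega)).1
      simp only [if_neg (by omega : ¬ (L0 + s < L0)), Nat.add_sub_cancel_left] at h1
      rw [hbf s hs'] at h2
      show x' (L0 + s + 1) = bar xd (L0 + Ls) g (L0 + s + 1)
      rw [h1, h2, ih (by omega)]
  funext p
  rw [pageBlock_mulVec]
  have h1 := (hx' (L0 + (p.1 : ℕ)) (by omega)).2
  have h2 := (htraj g (L0 + (p.1 : ℕ)) (by omega)).2
  simp only [if_neg (by omega : ¬ (L0 + (p.1 : ℕ) < L0)), Nat.add_sub_cancel_left] at h1
  rw [hbf (p.1 : ℕ) p.1.isLt] at h2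
  rw [hxs (p.1 : ℕ) (le_of_lt p.1.isLt)] at h1
  show ys (p.1 : ℕ) p.2 = bar yd (L0 + Ls) g (L0 + (p.1 : ℕ)) p.2
  rw [h2, ← h1]

end DDSim
end

section
/- Let (A,B,C,D) be an LTI system with O_{L_0} of rank n_x, and define P = 𝒞_{L_0} − A^{L_0} (O_{L_0}ᵀ O_{L_0})^{−1} O_{L_0}ᵀ 𝒯_{L_0} and Q = A^{L_0} (O_{L_0}ᵀ O_{L_0})^{−1} O_{L_0}ᵀ. Let (u_t)_{t=0}^{N−1}, (y_t)_{t=0}^{N−1} be a trajectory of the system, set L = L_0 + L_s, and partition the block Hankel matrices 𝓗_L(u) = [U_p; U_f] and 𝓗_L(y) = [Y_p; Y_f] into the first L_0 and last L_s block rows. Then Y_f = O_{L_s} (P U_p + Q Y_p) + 𝒯_{L_s} U_f. -/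
open Matrix

namespace DDSim

/-- Block lower-triangular Toeplitz matrix of impulse response coefficients: `(p, q)` block
entry is `D` if `p = q`, `C A^{p-q-1} B` if `p > q`, and `0` otherwise. -/
def toepMat {nx nu ny : ℕ} (A : Matrix (Fin nx) (Fin nx) ℝ) (B : Matrix (Fin nx) (Fin nu) ℝ)
    (C : Matrix (Fin ny) (Fin nx) ℝ) (D : Matrix (Fin ny) (Fin nu) ℝ) (i : ℕ) :
    Matrix (Fin i × Fin ny) (Fin i × Fin nu) ℝ :=
  fun p q =>
    if (p.1 : ℕ) = (q.1 : ℕ) then D p.2 q.2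
    else if (q.1 : ℕ) < (p.1 : ℕ) then (C * A ^ ((p.1 : ℕ) - (q.1 : ℕ) - 1) * B) p.2 q.2
    else 0

/-- Reversed extended controllability matrix `𝒞_i = [A^{i-1}B, …, AB, B]`. -/
def ctrbRev {nx nu : ℕ} (A : Matrix (Fin nx) (Fin nx) ℝ) (B : Matrix (Fin nx) (Fin nu) ℝ)
    (i : ℕ) : Matrix (Fin nx) (Fin i × Fin nu) ℝ :=
  fun k q => (A ^ (i - 1 - (q.1 : ℕ)) * B) k q.2

/-- matrix whose `j`-th column is the state `x (off + j)` -/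
def stateMat {nx : ℕ} (x : ℕ → Fin nx → ℝ) (off cols : ℕ) :
    Matrix (Fin nx) (Fin cols) ℝ :=
  fun k j => x (off + (j : ℕ)) k

lemma isUnit_of_rank_eq {n : ℕ} (M : Matrix (Fin n) (Fin n) ℝ) (h : M.rank = n) : IsUnit M := by
  rw [← Matrix.mulVec_surjective_iff_isUnit]
  have : LinearMap.range M.mulVecLin = ⊤ := by
    apply Submodule.eq_top_of_finrank_eq
    rw [Matrix.rank] at h
    simp [h]
  intro v
  obtain ⟨w, hw⟩ := LinearMap.range_eq_top.mp this v
  exact ⟨w, hw⟩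

lemma state_unfold {nx nu ny N : ℕ} {A : Matrix (Fin nx) (Fin nx) ℝ}
    {B : Matrix (Fin nx) (Fin nu) ℝ} {C : Matrix (Fin ny) (Fin nx) ℝ}
    {D : Matrix (Fin ny) (Fin nu) ℝ} {u : ℕ → Fin nu → ℝ} {y : ℕ → Fin ny → ℝ}
    {x : ℕ → Fin nx → ℝ} (hx : IsStateTraj A B C D N u y x) (s t : ℕ) (h : s + t ≤ N) :
    x (s + t) = (A ^ t).mulVec (x s) +
      ∑ i : Fin t, (A ^ (t - 1 - (i : ℕ)) * B).mulVec (u (s + (i : ℕ))) := by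
  induction t with
  | zero => simp
  | succ t ih =>
    have h1 : x (s + t + 1) = A.mulVec (x (s + t)) + B.mulVec (u (s + t)) :=
      (hx (s + t) (by omega)).1
    have h2 := ih (by omega)
    rw [show s + (t + 1) = s + t + 1 from by omega, h1, h2, Matrix.mulVec_add]
    rw [Fin.sum_univ_castSucc]
    have hpow : ∀ v : Fin nu → ℝ, ∀ k : ℕ, A.mulVec ((A ^ k * B).mulVec v)
        = (A ^ (k + 1) * B).mulVec v := by
      intro v k
      rw [Matrix.mulVec_mulVec, ← Matrix.mul_assoc, ← pow_succ']
    have hAsum : A.mulVec (∑ i : Fin t, (A ^ (t - 1 - (i : ℕ)) * B).mulVec (u (s + (i : ℕ))))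
        = ∑ i : Fin t, (A ^ (t - (i : ℕ)) * B).mulVec (u (s + (i : ℕ))) := by
      simp only [← Matrix.mulVecLin_apply, map_sum]
      simp only [Matrix.mulVecLin_apply]
      refine Finset.sum_congr rfl fun i _ => ?_
      rw [hpow, show t - 1 - (i : ℕ) + 1 = t - (i : ℕ) from by omega]
    rw [Matrix.mulVec_mulVec, ← pow_succ', hAsum]
    simp only [Fin.coe_castSucc, Fin.val_last]
    rw [show t + 1 - 1 - t = 0 from by omega, pow_zero, Matrix.one_mul]
    rw [add_assoc]
    simp only [Nat.add_sub_cancel]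

lemma blockRows_eq {nx nu ny N : ℕ} {A : Matrix (Fin nx) (Fin nx) ℝ}
    {B : Matrix (Fin nx) (Fin nu) ℝ} {C : Matrix (Fin ny) (Fin nx) ℝ}
    {D : Matrix (Fin ny) (Fin nu) ℝ} {u : ℕ → Fin nu → ℝ} {y : ℕ → Fin ny → ℝ}
    {x : ℕ → Fin nx → ℝ} (hx : IsStateTraj A B C D N u y x)
    (off rows cols : ℕ) (h : off + rows + cols ≤ N + 1) :
    blockRows y off rows cols =
      obsMat A C rows * stateMat x off cols +
        toepMat A B C D rows * blockRows u off rows cols := by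
  ext ⟨p, r⟩ j
  have hpN : off + (p : ℕ) + (j : ℕ) < N := by
    have h1 := p.isLt; have h2 := j.isLt; omega
  have hy := (hx _ hpN).2
  have hLHS : blockRows y off rows cols (p, r) j
      = (∑ k, (C * A ^ (p : ℕ)) r k * x (off + (j : ℕ)) k)
        + ((∑ i ∈ Finset.range (p : ℕ),
              ((C * A ^ ((p : ℕ) - 1 - i) * B).mulVec (u (off + i + (j : ℕ)))) r)
          + ((D.mulVec (u (off + (p : ℕ) + (j : ℕ)))) r)) := by
    show y (off + (p : ℕ) + (j : ℕ)) r = _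
    rw [hy]
    have hxv : x (off + (p : ℕ) + (j : ℕ)) = (A ^ (p : ℕ)).mulVec (x (off + (j : ℕ)))
        + ∑ i : Fin (p : ℕ), (A ^ ((p : ℕ) - 1 - (i : ℕ)) * B).mulVec
            (u (off + (j : ℕ) + (i : ℕ))) := by
      rw [show off + (p : ℕ) + (j : ℕ) = off + (j : ℕ) + (p : ℕ) from by omega]
      exact state_unfold hx (off + (j : ℕ)) (p : ℕ) (by omega)
    rw [Pi.add_apply, hxv, Matrix.mulVec_add, Matrix.mulVec_mulVec]
    have hc : C.mulVec (∑ i : Fin (p : ℕ), (A ^ ((p : ℕ) - 1 - (i : ℕ)) * B).mulVec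
          (u (off + (j : ℕ) + (i : ℕ))))
        = ∑ i : Fin (p : ℕ), (C * A ^ ((p : ℕ) - 1 - (i : ℕ)) * B).mulVec
            (u (off + (j : ℕ) + (i : ℕ))) := by
      simp only [← Matrix.mulVecLin_apply, map_sum]
      simp only [Matrix.mulVecLin_apply, Matrix.mulVec_mulVec, Matrix.mul_assoc]
    rw [hc, Pi.add_apply, add_assoc]
    have e2 : (∑ i : Fin (p : ℕ), (C * A ^ ((p : ℕ) - 1 - (i : ℕ)) * B).mulVec
          (u (off + (j : ℕ) + (i : ℕ)))) r
        = ∑ i ∈ Finset.range (p : ℕ),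
            ((C * A ^ ((p : ℕ) - 1 - i) * B).mulVec (u (off + i + (j : ℕ)))) r := by
      rw [Finset.sum_apply]
      rw [Fin.sum_univ_eq_sum_range
        (fun i => ((C * A ^ ((p : ℕ) - 1 - i) * B).mulVec (u (off + (j : ℕ) + i))) r)]
      refine Finset.sum_congr rfl fun i hi => ?_
      rw [show off + (j : ℕ) + i = off + i + (j : ℕ) from by omega]
    rw [e2]
    simp [Matrix.mulVec, dotProduct]
  have htoep : ∑ qs : Fin rows × Fin nu,
        toepMat A B C D rows (p, r) qs * blockRows u off rows cols qs j
      = (∑ i ∈ Finset.range (p : ℕ),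
            ((C * A ^ ((p : ℕ) - 1 - i) * B).mulVec (u (off + i + (j : ℕ)))) r)
        + ((D.mulVec (u (off + (p : ℕ) + (j : ℕ)))) r) := by
    rw [Fintype.sum_prod_type]
    have hq : ∀ q : Fin rows,
        (∑ s, toepMat A B C D rows (p, r) (q, s) * blockRows u off rows cols (q, s) j)
        = (if (q : ℕ) < (p : ℕ) then
            ((C * A ^ ((p : ℕ) - 1 - (q : ℕ)) * B).mulVec (u (off + (q : ℕ) + (j : ℕ)))) r
          else 0)
          + (if q = p then ((D.mulVec (u (off + (p : ℕ) + (j : ℕ)))) r) else 0) := by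
      intro q
      by_cases h1 : (p : ℕ) = (q : ℕ)
      · have hqp : q = p := Fin.ext h1.symm
        subst hqp
        simp [toepMat, blockRows, Matrix.mulVec, dotProduct]
      · have hne : ¬ q = p := fun hh => h1 (by rw [hh])
        by_cases h2 : (q : ℕ) < (p : ℕ)
        · simp only [toepMat, blockRows, h1, h2, if_true, if_false, hne, if_neg,
            Ne.symm, add_zero]
          rw [show (p : ℕ) - (q : ℕ) - 1 = (p : ℕ) - 1 - (q : ℕ) from by omega]
          simp [Matrix.mulVec, dotProduct]
        · simp [toepMat, blockRows, h1, h2, hne]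
    rw [Finset.sum_congr rfl fun q _ => hq q, Finset.sum_add_distrib]
    congr 1
    · rw [Fin.sum_univ_eq_sum_range (fun i => if i < (p : ℕ) then
          ((C * A ^ ((p : ℕ) - 1 - i) * B).mulVec (u (off + i + (j : ℕ)))) r else 0)]
      rw [← Finset.sum_filter]
      have hfil : (Finset.range rows).filter (fun i => i < (p : ℕ)) = Finset.range (p : ℕ) := by
        have := p.isLt
        ext i
        simp only [Finset.mem_filter, Finset.mem_range]
        omega
      rw [hfil]
    · simp
  rw [hLHS, Matrix.add_apply, Matrix.mul_apply, Matrix.mul_apply, htoep]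
  rfl

lemma state_shift {nx nu ny N : ℕ} {A : Matrix (Fin nx) (Fin nx) ℝ}
    {B : Matrix (Fin nx) (Fin nu) ℝ} {C : Matrix (Fin ny) (Fin nx) ℝ}
    {D : Matrix (Fin ny) (Fin nu) ℝ} {u : ℕ → Fin nu → ℝ} {y : ℕ → Fin ny → ℝ}
    {x : ℕ → Fin nx → ℝ} (hx : IsStateTraj A B C D N u y x)
    (L0 cols : ℕ) (h : cols + L0 ≤ N + 1) :
    stateMat x L0 cols = ctrbRev A B L0 * blockRows u 0 L0 cols
      + A ^ L0 * stateMat x 0 cols := by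
  ext k j
  have hxv : x (L0 + (j : ℕ)) = (A ^ L0).mulVec (x (j : ℕ)) +
      ∑ i : Fin L0, (A ^ (L0 - 1 - (i : ℕ)) * B).mulVec (u ((j : ℕ) + (i : ℕ))) := by
    rw [show L0 + (j : ℕ) = (j : ℕ) + L0 from by omega]
    exact state_unfold hx (j : ℕ) L0 (by have := j.isLt; omega)
  show x (L0 + (j : ℕ)) k = _
  rw [Matrix.add_apply, Matrix.mul_apply, Matrix.mul_apply, hxv, Pi.add_apply]
  rw [add_comm]
  congr 1
  · rw [Fintype.sum_prod_type, Finset.sum_apply]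
    refine Finset.sum_congr rfl fun q _ => ?_
    rw [show (j : ℕ) + (q : ℕ) = 0 + (q : ℕ) + (j : ℕ) from by omega]
    simp [ctrbRev, blockRows, Matrix.mulVec, dotProduct]
  · simp [Matrix.mulVec, dotProduct, stateMat]

/-- For a Hankel partition of a trajectory, `Y_f = O_{L_s}(P U_p + Q Y_p) + 𝒯_{L_s} U_f`,
with `P = 𝒞_{L₀} - A^{L₀} O_{L₀}† 𝒯_{L₀}` and `Q = A^{L₀} O_{L₀}†`, where
`O_{L₀}† = (O_{L₀}ᵀ O_{L₀})⁻¹ O_{L₀}ᵀ`. -/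
theorem yf_from_partition
    {nx nu ny : ℕ}
    (A : Matrix (Fin nx) (Fin nx) ℝ) (B : Matrix (Fin nx) (Fin nu) ℝ)
    (C : Matrix (Fin ny) (Fin nx) ℝ) (D : Matrix (Fin ny) (Fin nu) ℝ)
    (N L0 Ls : ℕ) (hL0 : 1 ≤ L0) (hLN : L0 + Ls ≤ N)
    (hrank : (obsMat A C L0).rank = nx)
    (u : ℕ → Fin nu → ℝ) (y : ℕ → Fin ny → ℝ)
    (htraj : IsTraj A B C D N u y) :
    blockRows y L0 Ls (N - (L0 + Ls) + 1) =
      obsMat A C Ls *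
        ((ctrbRev A B L0 -
            A ^ L0 * ((obsMat A C L0)ᵀ * obsMat A C L0)⁻¹ * (obsMat A C L0)ᵀ *
              toepMat A B C D L0) * blockRows u 0 L0 (N - (L0 + Ls) + 1) +
          (A ^ L0 * ((obsMat A C L0)ᵀ * obsMat A C L0)⁻¹ * (obsMat A C L0)ᵀ) *
            blockRows y 0 L0 (N - (L0 + Ls) + 1)) +
      toepMat A B C D Ls * blockRows u L0 Ls (N - (L0 + Ls) + 1) := by
  obtain ⟨x, hx⟩ := htraj
  set cols := N - (L0 + Ls) + 1 with hcols
  set O := obsMat A C L0 with hO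
  set G := Oᵀ * O with hG
  set Q := A ^ L0 * G⁻¹ * Oᵀ with hQ
  have hGdet : IsUnit G.det := by
    rw [← Matrix.isUnit_iff_isUnit_det]
    exact isUnit_of_rank_eq G (by rw [hG, Matrix.rank_transpose_mul_self]; exact hrank)
  have hGinv : G⁻¹ * G = 1 := Matrix.nonsing_inv_mul G hGdet
  have hQO : Q * O = A ^ L0 := by
    rw [hQ, Matrix.mul_assoc (A ^ L0 * G⁻¹) Oᵀ O, ← hG,
      Matrix.mul_assoc (A ^ L0) G⁻¹ G, hGinv, Matrix.mul_one]
  have hYp := blockRows_eq (D := D) hx 0 L0 cols (by omega)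
  have hYf := blockRows_eq (D := D) hx L0 Ls cols (by omega)
  have hXL := state_shift (C := C) (D := D) hx L0 cols (by omega)
  rw [hYf, hYp]
  have hinner : (ctrbRev A B L0 - Q * toepMat A B C D L0) * blockRows u 0 L0 cols +
      Q * (O * stateMat x 0 cols + toepMat A B C D L0 * blockRows u 0 L0 cols)
      = stateMat x L0 cols := by
    rw [hXL, Matrix.sub_mul, Matrix.mul_add, ← Matrix.mul_assoc Q O (stateMat x 0 cols), hQO,
      ← Matrix.mul_assoc Q (toepMat A B C D L0) (blockRows u 0 L0 cols)]
    abel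
  rw [hinner]

end DDSim
end
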